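/- arXiv:1111.3145 — 4 statements merged into one kernel-verified Lean document; each statement's English description precedes it below -/
import Mathlib

section
/- For any ν > -1/2 and all z ≥ 0, the integral ∫_{-1}^{1} exp(z·s) (Γ(ν+1)/(√π Γ(ν+1/2))) (1-s²)^{ν-1/2} ds is comparable to (1+z)^{-ν-1/2} e^z; that is, there exist positive constants c, C depending only on ν such that c·(1+z)^{-ν-1/2} e^z ≤ ∫_{-1}^1 e^{zs} dΠ_ν(s) ≤ C·(1+z)^{-ν-1/2} e^z for all z ≥ 0. -/
/-!
With `μ = ν - 1/2 > -1`, the weight `(1 - s²)^μ` is even and `e^{-zs} ≤ e^{zs}` for `s, z ≥ 0`,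
so the integral lies between `∫₀¹ e^{zs} (1 - s²)^μ ds` and twice it. On `[0, 1]` the factor
`(1 + s)^μ` stays between `1` and `2^μ`, which reduces matters to
`∫₀¹ e^{zs} (1 - s)^μ ds = e^z ∫₀¹ t^μ e^{-zt} dt`. This last integral is of order
`(1 + z)^{-(μ+1)}`: it is at least `e⁻¹ ∫₀^{1/(1+z)} t^μ dt` and at most
`e ∫₀^∞ t^μ e^{-(1+z)t} dt = e Γ(μ+1) (1+z)^{-(μ+1)}`.
-/

open Real MeasureTheory Set

section

variable {μ : ℝ}

lemma intervalIntegrable_one_sub_rpow (hμ : -1 < μ) :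
    IntervalIntegrable (fun s : ℝ => (1 - s) ^ μ) volume 0 1 := by
  simpa using (intervalIntegral.intervalIntegrable_rpow' (a := 1) (b := 0) hμ).comp_sub_left 1

lemma one_sub_sq_rpow_eq {s : ℝ} (hs : s ∈ Icc (-1 : ℝ) 1) (μ : ℝ) :
    (1 - s ^ 2) ^ μ = (1 + s) ^ μ * (1 - s) ^ μ := by
  rw [← mul_rpow (by linarith [hs.1]) (by linarith [hs.2])]
  ring_nf

lemma rpow_mem_Icc_min_max {x : ℝ} (hx : x ∈ Icc (1 : ℝ) 2) (μ : ℝ) :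
    x ^ μ ∈ Icc (min 1 ((2 : ℝ) ^ μ)) (max 1 ((2 : ℝ) ^ μ)) := by
  obtain ⟨h1, h2⟩ := hx
  rcases le_total 0 μ with hμ | hμ
  · exact ⟨min_le_of_left_le (one_le_rpow h1 hμ),
      le_max_of_le_right (rpow_le_rpow (by linarith) h2 hμ)⟩
  · exact ⟨min_le_of_right_le (rpow_le_rpow_of_nonpos (by linarith) h2 hμ),
      le_max_of_le_left (rpow_le_one_of_one_le_of_nonpos h1 hμ)⟩

lemma intervalIntegrable_mul_one_sub_sq_rpow (hμ : -1 < μ) {g : ℝ → ℝ}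
    (hg : ContinuousOn g (Icc 0 1)) :
    IntervalIntegrable (fun s => g s * (1 - s ^ 2) ^ μ) volume 0 1 := by
  have h1 : ContinuousOn (fun s : ℝ => g s * (1 + s) ^ μ) (uIcc 0 1) := by
    rw [uIcc_of_le zero_le_one]
    exact hg.mul ((by fun_prop : ContinuousOn (fun s : ℝ => 1 + s) _).rpow_const
      fun s hs => Or.inl (by linarith [hs.1]))
  refine ((intervalIntegrable_one_sub_rpow hμ).continuousOn_mul h1).congr fun s hs => ?_
  rw [uIoc_of_le zero_le_one] at hs
  simp only [mul_assoc, one_sub_sq_rpow_eq ⟨by linarith [hs.1], hs.2⟩]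

lemma integral_Icc_exp_mul_one_sub_sq_rpow (hμ : -1 < μ) (z : ℝ) :
    ∫ s in Icc (-1 : ℝ) 1, exp (z * s) * (1 - s ^ 2) ^ μ =
      ∫ s in (0 : ℝ)..1, (exp (-(z * s)) + exp (z * s)) * (1 - s ^ 2) ^ μ := by
  have hpos : IntervalIntegrable (fun s => exp (z * s) * (1 - s ^ 2) ^ μ) volume 0 1 :=
    intervalIntegrable_mul_one_sub_sq_rpow hμ (by fun_prop)
  have hneg : IntervalIntegrable (fun s => exp (-(z * s)) * (1 - s ^ 2) ^ μ) volume 0 1 :=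
    intervalIntegrable_mul_one_sub_sq_rpow hμ (by fun_prop)
  have hneg' : IntervalIntegrable (fun s => exp (z * s) * (1 - s ^ 2) ^ μ) volume (-1) 0 := by
    rw [IntervalIntegrable.iff_comp_neg]
    simpa using hneg.symm
  rw [integral_Icc_eq_integral_Ioc, ← intervalIntegral.integral_of_le (by norm_num),
    ← intervalIntegral.integral_add_adjacent_intervals hneg' hpos]
  simp_rw [add_mul]
  rw [intervalIntegral.integral_add hneg hpos]
  congr 1
  have := intervalIntegral.integral_comp_neg (a := 0) (b := 1)
    (fun s => exp (z * s) * (1 - s ^ 2) ^ μ)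
  simp only [neg_zero, mul_neg, neg_sq] at this
  exact this.symm

lemma integral_exp_mul_one_sub_rpow (z μ : ℝ) :
    ∫ s in (0 : ℝ)..1, exp (z * s) * (1 - s) ^ μ =
      exp z * ∫ t in (0 : ℝ)..1, t ^ μ * exp (-(z * t)) := by
  rw [← intervalIntegral.integral_const_mul]
  have := intervalIntegral.integral_comp_sub_left (a := 0) (b := 1)
    (fun t => exp z * (t ^ μ * exp (-(z * t)))) 1
  simp only [sub_zero, sub_self] at this
  rw [← this]
  congr 1 with s
  rw [show z * s = z + -(z * (1 - s)) by ring, exp_add]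
  ring

lemma intervalIntegrable_rpow_mul_exp_neg_mul (hμ : -1 < μ) (z : ℝ) {a b : ℝ} :
    IntervalIntegrable (fun t : ℝ => t ^ μ * exp (-(z * t))) volume a b :=
  (intervalIntegral.intervalIntegrable_rpow' hμ).mul_continuousOn (by fun_prop)

lemma integral_rpow_mul_exp_neg_mul_le (hμ : -1 < μ) {z : ℝ} (hz : 0 < 1 + z) :
    ∫ t in (0 : ℝ)..1, t ^ μ * exp (-(z * t)) ≤
      exp 1 * Gamma (μ + 1) * (1 + z) ^ (-(μ + 1)) := by
  have hΓ := integral_rpow_mul_exp_neg_mul_Ioi (a := μ + 1) (by linarith) hz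
  rw [add_sub_cancel_right] at hΓ
  have hint : IntegrableOn (fun t : ℝ => t ^ μ * exp (-((1 + z) * t))) (Ioi 0) := by
    simpa only [rpow_one, neg_mul] using integrableOn_rpow_mul_exp_neg_mul_rpow hμ one_pos hz
  calc ∫ t in (0 : ℝ)..1, t ^ μ * exp (-(z * t))
      ≤ ∫ t in (0 : ℝ)..1, exp 1 * (t ^ μ * exp (-((1 + z) * t))) := by
        refine intervalIntegral.integral_mono_on zero_le_one
          (intervalIntegrable_rpow_mul_exp_neg_mul hμ z)
          ((intervalIntegrable_rpow_mul_exp_neg_mul hμ (1 + z)).const_mul _) fun t ht => ?_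
        -- `e^{-zt} = e^t e^{-(1+z)t}` and `t ≤ 1`
        calc t ^ μ * exp (-(z * t)) ≤ t ^ μ * exp (1 + -((1 + z) * t)) := by
              gcongr
              · exact rpow_nonneg ht.1 μ
              · nlinarith [ht.2]
          _ = exp 1 * (t ^ μ * exp (-((1 + z) * t))) := by rw [exp_add]; ring
    _ = exp 1 * ∫ t in Ioc (0 : ℝ) 1, t ^ μ * exp (-((1 + z) * t)) := by
        rw [intervalIntegral.integral_const_mul, intervalIntegral.integral_of_le zero_le_one]
    _ ≤ exp 1 * ∫ t in Ioi (0 : ℝ), t ^ μ * exp (-((1 + z) * t)) := by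
        refine mul_le_mul_of_nonneg_left
          (setIntegral_mono_set hint ?_ Ioc_subset_Ioi_self.eventuallyLE) (exp_pos 1).le
        filter_upwards [self_mem_ae_restrict measurableSet_Ioi] with t ht
        exact mul_nonneg (rpow_nonneg ht.le μ) (exp_pos _).le
    _ = exp 1 * Gamma (μ + 1) * (1 + z) ^ (-(μ + 1)) := by
        rw [hΓ, one_div, inv_rpow hz.le, ← rpow_neg hz.le]
        ring

lemma le_integral_rpow_mul_exp_neg_mul (hμ : -1 < μ) {z : ℝ} (hz : 0 ≤ z) :
    exp (-1) / (μ + 1) * (1 + z) ^ (-(μ + 1)) ≤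
      ∫ t in (0 : ℝ)..1, t ^ μ * exp (-(z * t)) := by
  have hz1 : 0 < 1 + z := by linarith
  set δ := (1 + z)⁻¹
  have hδ0 : 0 < δ := inv_pos.mpr hz1
  have hδ1 : δ ≤ 1 := inv_le_one_of_one_le₀ (by linarith)
  have hzδ : z * δ ≤ 1 := by
    rw [← div_eq_mul_inv, div_le_one hz1]
    linarith
  calc exp (-1) / (μ + 1) * (1 + z) ^ (-(μ + 1))
      = ∫ t in (0 : ℝ)..δ, exp (-1) * t ^ μ := by
        rw [intervalIntegral.integral_const_mul, integral_rpow (Or.inl hμ),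
          zero_rpow (by linarith), inv_rpow hz1.le, ← rpow_neg hz1.le]
        ring
    _ ≤ ∫ t in (0 : ℝ)..δ, t ^ μ * exp (-(z * t)) := by
        refine intervalIntegral.integral_mono_on hδ0.le
          ((intervalIntegral.intervalIntegrable_rpow' hμ).const_mul _)
          (intervalIntegrable_rpow_mul_exp_neg_mul hμ z) fun t ht => ?_
        rw [mul_comm]
        gcongr
        · exact rpow_nonneg ht.1 μ
        · nlinarith [ht.2]
    _ ≤ ∫ t in (0 : ℝ)..1, t ^ μ * exp (-(z * t)) := by
        refine intervalIntegral.integral_mono_interval le_rfl hδ0.le hδ1 ?_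
          (intervalIntegrable_rpow_mul_exp_neg_mul hμ z)
        filter_upwards [self_mem_ae_restrict measurableSet_Ioc] with t ht
        exact mul_nonneg (rpow_nonneg ht.1.le μ) (exp_pos _).le

theorem le_integral_Icc_exp_mul_one_sub_sq_rpow (hμ : -1 < μ) {z : ℝ} (hz : 0 ≤ z) :
    min 1 ((2 : ℝ) ^ μ) * (exp (-1) / (μ + 1)) * (1 + z) ^ (-(μ + 1)) * exp z ≤
      ∫ s in Icc (-1 : ℝ) 1, exp (z * s) * (1 - s ^ 2) ^ μ := by
  rw [integral_Icc_exp_mul_one_sub_sq_rpow hμ]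
  calc min 1 ((2 : ℝ) ^ μ) * (exp (-1) / (μ + 1)) * (1 + z) ^ (-(μ + 1)) * exp z
      = min 1 ((2 : ℝ) ^ μ) * (exp z * (exp (-1) / (μ + 1) * (1 + z) ^ (-(μ + 1)))) := by
        ring
    _ ≤ min 1 ((2 : ℝ) ^ μ) * (exp z * ∫ t in (0 : ℝ)..1, t ^ μ * exp (-(z * t))) := by
        gcongr
        exact le_integral_rpow_mul_exp_neg_mul hμ hz
    _ = ∫ s in (0 : ℝ)..1, min 1 ((2 : ℝ) ^ μ) * (exp (z * s) * (1 - s) ^ μ) := by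
        rw [intervalIntegral.integral_const_mul, integral_exp_mul_one_sub_rpow]
    _ ≤ ∫ s in (0 : ℝ)..1, (exp (-(z * s)) + exp (z * s)) * (1 - s ^ 2) ^ μ := by
        refine intervalIntegral.integral_mono_on zero_le_one
          (((intervalIntegrable_one_sub_rpow hμ).continuousOn_mul (by fun_prop)).const_mul _)
          (intervalIntegrable_mul_one_sub_sq_rpow hμ (by fun_prop)) fun s hs => ?_
        rw [one_sub_sq_rpow_eq ⟨by linarith [hs.1], hs.2⟩]
        have hm :=
          (rpow_mem_Icc_min_max (x := 1 + s) ⟨by linarith [hs.1], by linarith [hs.2]⟩ μ).1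
        have hW := rpow_nonneg (by linarith [hs.2] : (0 : ℝ) ≤ 1 - s) μ
        have hV := rpow_nonneg (by linarith [hs.1] : (0 : ℝ) ≤ 1 + s) μ
        calc min 1 ((2 : ℝ) ^ μ) * (exp (z * s) * (1 - s) ^ μ)
            ≤ (0 + exp (z * s)) * ((1 + s) ^ μ * (1 - s) ^ μ) := by
              rw [zero_add, mul_left_comm]
              gcongr
          _ ≤ (exp (-(z * s)) + exp (z * s)) * ((1 + s) ^ μ * (1 - s) ^ μ) := by
              gcongr
              exact (exp_pos _).le

theorem integral_Icc_exp_mul_one_sub_sq_rpow_le (hμ : -1 < μ) {z : ℝ} (hz : 0 ≤ z) :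
    ∫ s in Icc (-1 : ℝ) 1, exp (z * s) * (1 - s ^ 2) ^ μ ≤
      2 * max 1 ((2 : ℝ) ^ μ) * (exp 1 * Gamma (μ + 1)) * (1 + z) ^ (-(μ + 1)) * exp z := by
  rw [integral_Icc_exp_mul_one_sub_sq_rpow hμ]
  calc ∫ s in (0 : ℝ)..1, (exp (-(z * s)) + exp (z * s)) * (1 - s ^ 2) ^ μ
      ≤ ∫ s in (0 : ℝ)..1, 2 * max 1 ((2 : ℝ) ^ μ) * (exp (z * s) * (1 - s) ^ μ) := by
        refine intervalIntegral.integral_mono_on zero_le_one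
          (intervalIntegrable_mul_one_sub_sq_rpow hμ (by fun_prop))
          (((intervalIntegrable_one_sub_rpow hμ).continuousOn_mul (by fun_prop)).const_mul _)
          fun s hs => ?_
        rw [one_sub_sq_rpow_eq ⟨by linarith [hs.1], hs.2⟩]
        have hM :=
          (rpow_mem_Icc_min_max (x := 1 + s) ⟨by linarith [hs.1], by linarith [hs.2]⟩ μ).2
        have hW := rpow_nonneg (by linarith [hs.2] : (0 : ℝ) ≤ 1 - s) μ
        have hV := rpow_nonneg (by linarith [hs.1] : (0 : ℝ) ≤ 1 + s) μ
        have hexp : exp (-(z * s)) ≤ exp (z * s) := by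
          gcongr
          nlinarith [hs.1]
        calc (exp (-(z * s)) + exp (z * s)) * ((1 + s) ^ μ * (1 - s) ^ μ)
            ≤ (exp (z * s) + exp (z * s)) * (max 1 ((2 : ℝ) ^ μ) * (1 - s) ^ μ) := by
              gcongr
          _ = 2 * max 1 ((2 : ℝ) ^ μ) * (exp (z * s) * (1 - s) ^ μ) := by ring
    _ = 2 * max 1 ((2 : ℝ) ^ μ) * (exp z * ∫ t in (0 : ℝ)..1, t ^ μ * exp (-(z * t))) := by
        rw [intervalIntegral.integral_const_mul, integral_exp_mul_one_sub_rpow]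
    _ ≤ 2 * max 1 ((2 : ℝ) ^ μ) * (exp z * (exp 1 * Gamma (μ + 1) * (1 + z) ^ (-(μ + 1)))) := by
        gcongr
        exact integral_rpow_mul_exp_neg_mul_le hμ (by linarith)
    _ = 2 * max 1 ((2 : ℝ) ^ μ) * (exp 1 * Gamma (μ + 1)) * (1 + z) ^ (-(μ + 1)) * exp z := by
        ring

end

/-- For ν > -1/2, the integral ∫_{-1}^1 e^{zs} dΠ_ν(s) is comparable to (1+z)^{-ν-1/2} e^z
for z ≥ 0, where dΠ_ν(s) = (Γ(ν+1)/(√π Γ(ν+1/2))) (1-s²)^{ν-1/2} ds on [-1,1]. -/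
theorem stmt0 (ν : ℝ) (hν : -1/2 < ν) :
    ∃ c C : ℝ, 0 < c ∧ 0 < C ∧ ∀ z : ℝ, 0 ≤ z →
      c * (1 + z) ^ (-ν - 1/2) * Real.exp z ≤
        (∫ s in Set.Icc (-1 : ℝ) 1,
          Real.exp (z * s) *
            (Real.Gamma (ν + 1) / (Real.sqrt π * Real.Gamma (ν + 1/2)) *
              (1 - s ^ 2) ^ (ν - 1/2))) ∧
      (∫ s in Set.Icc (-1 : ℝ) 1,
          Real.exp (z * s) *
            (Real.Gamma (ν + 1) / (Real.sqrt π * Real.Gamma (ν + 1/2)) *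
              (1 - s ^ 2) ^ (ν - 1/2))) ≤
        C * (1 + z) ^ (-ν - 1/2) * Real.exp z := by
  set K := Gamma (ν + 1) / (√π * Gamma (ν + 1/2))
  have hK : 0 < K := div_pos (Gamma_pos_of_pos (by linarith))
    (mul_pos (sqrt_pos.mpr pi_pos) (Gamma_pos_of_pos (by linarith)))
  have hμ : -1 < ν - 1/2 := by linarith
  have hexp : -ν - 1/2 = -(ν - 1/2 + 1) := by ring
  refine ⟨K * (min 1 (2 ^ (ν - 1/2)) * (exp (-1) / (ν - 1/2 + 1))),
    K * (2 * max 1 (2 ^ (ν - 1/2)) * (exp 1 * Gamma (ν - 1/2 + 1))), ?_, ?_, fun z hz => ?_⟩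
  · have : 0 < ν - 1/2 + 1 := by linarith
    positivity
  · have := Gamma_pos_of_pos (by linarith : 0 < ν - 1/2 + 1)
    positivity
  simp_rw [mul_left_comm _ K, integral_const_mul, hexp, mul_assoc K]
  exact ⟨mul_le_mul_of_nonneg_left (le_integral_Icc_exp_mul_one_sub_sq_rpow hμ hz) hK.le,
    mul_le_mul_of_nonneg_left (integral_Icc_exp_mul_one_sub_sq_rpow_le hμ hz) hK.le⟩
end

section
/- Let κ ≥ 0 and let γ, ν be real numbers with γ > ν + 1/2 ≥ 0. Then there exist positive constants c, C depending only on κ, γ, ν such that for all real numbers 0 < B < A < D, c ≤ [∫_{-1}^{1} (D-Bs)^{-κ}(A-Bs)^{-γ} dΠ_ν(s)] · (D-B)^{κ} A^{ν+1/2} (A-B)^{γ-ν-1/2} ≤ C, where for ν > -1/2 the measure dΠ_ν(s) is proportional to (1-s²)^{ν-1/2} ds normalized to a probability measure, and Π_{-1/2} = (δ_{-1}+δ_{1})/2. -/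
open Real MeasureTheory

/-- The measure Π_ν on [-1,1]: for ν > -1/2 it has density
(Γ(ν+1)/(√π Γ(ν+1/2)))(1-s²)^{ν-1/2} with respect to Lebesgue measure;
Π_{-1/2} = (δ_{-1} + δ_1)/2. -/
noncomputable def jacobiPi (ν : ℝ) : Measure ℝ :=
  if ν = -1/2 then
    (1/2 : ENNReal) • (Measure.dirac (-1) + Measure.dirac 1)
  else
    (volume.restrict (Set.Icc (-1 : ℝ) 1)).withDensity
      (fun s => ENNReal.ofReal
        (Real.Gamma (ν + 1) / (Real.sqrt π * Real.Gamma (ν + 1/2)) * (1 - s ^ 2) ^ (ν - 1/2)))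

open Set

/-!
Write `p = ν - 1/2`, `g s = (D - B s)^(-κ) (A - B s)^(-γ)` and `λ = A / (A - B) ≥ 1`. Since `g` is
increasing on `[-1, 1]` and the weight `(1 - s²)^p` is even, the integral over `[-1, 1]` lies
between the integral over `[0, 1]` and twice it; on `[0, 1]` the factor `(1 + s)^p` is pinched
between `min 1 2^p` and `max 1 2^p`, leaving `∫₀¹ u^p g (1 - u) du`. From
`(A - B)(1 + λu)/2 ≤ A - B + Bu ≤ (A - B)(1 + λu)` and `D - B ≤ D - B + Bu ≤ (D - B)(1 + λu)`,
`g (1 - u)` is squeezed between multiples of `(D - B)^(-κ) (A - B)^(-γ) (1 + λu)^(-q)` with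
`q = κ + γ` and `q = γ`. Finally `∫₀¹ u^p (1 + λu)^(-q) du = λ^(-p-1) ∫₀^λ v^p (1 + v)^(-q) dv`,
which lies between `λ^(-p-1) ∫₀¹` and `λ^(-p-1) ∫₀^∞`, finite because `γ > p + 1`.
For `ν = -1/2` the integral is `(g (-1) + g 1) / 2 ∈ [g 1 / 2, g 1]`.
-/

section RpowKernel

variable {p : ℝ}

lemma intervalIntegrable_rpow_mul_one_add_mul_rpow (hp : -1 < p) {r : ℝ} (hr : 0 ≤ r) (q : ℝ)
    {a : ℝ} (ha : 0 ≤ a) :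
    IntervalIntegrable (fun u => u ^ p * (1 + r * u) ^ (-q)) volume 0 a := by
  refine (intervalIntegral.intervalIntegrable_rpow' hp).mul_continuousOn
    (ContinuousOn.rpow_const (by fun_prop) fun u hu => Or.inl ?_)
  rw [uIcc_of_le ha] at hu
  nlinarith [hu.1]

lemma integrableOn_rpow_mul_one_add_rpow_Ioi (hp : -1 < p) {q : ℝ} (hq : p + 1 < q) :
    IntegrableOn (fun v : ℝ => v ^ p * (1 + v) ^ (-q)) (Ioi 0) := by
  rw [← Ioc_union_Ioi_eq_Ioi zero_le_one]
  refine IntegrableOn.union ?_ ?_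
  · simpa using (intervalIntegrable_rpow_mul_one_add_mul_rpow hp zero_le_one q zero_le_one).1
  · refine (integrableOn_Ioi_rpow_of_lt (by linarith : p - q < -1) one_pos).mono'
      (by fun_prop) ((ae_restrict_iff' measurableSet_Ioi).2 (.of_forall fun v hv => ?_))
    have hv : (0 : ℝ) < v := one_pos.trans hv
    calc ‖v ^ p * (1 + v) ^ (-q)‖ = v ^ p * (1 + v) ^ (-q) :=
          Real.norm_of_nonneg (by positivity)
      _ ≤ v ^ p * v ^ (-q) :=
          mul_le_mul_of_nonneg_left (rpow_le_rpow_of_nonpos hv (by linarith) (by linarith))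
            (by positivity)
      _ = v ^ (p - q) := by rw [sub_eq_add_neg, rpow_add hv]

lemma integral_rpow_mul_one_add_rpow_le_integral_Ioi (hp : -1 < p) {q : ℝ} (hq : p + 1 < q) {X : ℝ}
    (hX : 0 ≤ X) :
    ∫ v in 0..X, v ^ p * (1 + v) ^ (-q) ≤ ∫ v in Ioi 0, v ^ p * (1 + v) ^ (-q) := by
  rw [intervalIntegral.integral_of_le hX]
  refine setIntegral_mono_set (integrableOn_rpow_mul_one_add_rpow_Ioi hp hq)
    ((ae_restrict_iff' measurableSet_Ioi).2 (.of_forall fun v hv => ?_))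
    Ioc_subset_Ioi_self.eventuallyLE
  have hv : (0 : ℝ) < v := hv
  positivity

lemma integral_rpow_mul_one_add_rpow_pos (hp : -1 < p) (q : ℝ) :
    0 < ∫ v in 0..1, v ^ p * (1 + v) ^ (-q) := by
  refine intervalIntegral.intervalIntegral_pos_of_pos_on ?_ (fun v hv => ?_) one_pos
  · simpa using intervalIntegrable_rpow_mul_one_add_mul_rpow hp zero_le_one q zero_le_one
  · have hv : (0 : ℝ) < v := hv.1
    positivity

lemma integral_rpow_mul_one_add_mul_rpow (q : ℝ) {r : ℝ} (hr : 0 < r) :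
    ∫ u in 0..1, u ^ p * (1 + r * u) ^ (-q)
      = r ^ (-(p + 1)) * ∫ v in 0..r, v ^ p * (1 + v) ^ (-q) := by
  have hscale : ∀ u ∈ uIcc (0 : ℝ) 1, u ^ p * (1 + r * u) ^ (-q)
      = r ^ (-p) * ((r * u) ^ p * (1 + r * u) ^ (-q)) := by
    intro u hu
    rw [uIcc_of_le zero_le_one] at hu
    rw [mul_rpow hr.le hu.1, rpow_neg hr.le]
    field_simp
  rw [intervalIntegral.integral_congr hscale, intervalIntegral.integral_const_mul,
    intervalIntegral.integral_comp_mul_left (fun v => v ^ p * (1 + v) ^ (-q)) hr.ne', mul_zero,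
    mul_one, smul_eq_mul, ← mul_assoc, neg_add, rpow_add hr, rpow_neg_one]

lemma integral_rpow_mul_one_add_mul_rpow_le (hp : -1 < p) {q : ℝ} (hq : p + 1 < q) {r : ℝ}
    (hr : 0 < r) :
    ∫ u in 0..1, u ^ p * (1 + r * u) ^ (-q)
      ≤ r ^ (-(p + 1)) * ∫ v in Ioi 0, v ^ p * (1 + v) ^ (-q) := by
  rw [integral_rpow_mul_one_add_mul_rpow q hr]
  gcongr
  exact integral_rpow_mul_one_add_rpow_le_integral_Ioi hp hq hr.le

lemma le_integral_rpow_mul_one_add_mul_rpow (hp : -1 < p) (q : ℝ) {r : ℝ} (hr : 1 ≤ r) :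
    r ^ (-(p + 1)) * ∫ v in 0..1, v ^ p * (1 + v) ^ (-q)
      ≤ ∫ u in 0..1, u ^ p * (1 + r * u) ^ (-q) := by
  rw [integral_rpow_mul_one_add_mul_rpow q (zero_lt_one.trans_le hr)]
  have hint := intervalIntegrable_rpow_mul_one_add_mul_rpow hp zero_le_one q (zero_le_one.trans hr)
  simp only [one_mul] at hint
  gcongr
  refine intervalIntegral.integral_mono_interval le_rfl zero_le_one hr
    ((ae_restrict_iff' measurableSet_Ioc).2 (.of_forall fun v hv => ?_)) hint
  have hv : (0 : ℝ) < v := hv.1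
  positivity

end RpowKernel

lemma one_add_rpow_mem_Icc {s : ℝ} (hs : s ∈ Icc (0 : ℝ) 1) (p : ℝ) :
    (1 + s) ^ p ∈ Icc (min 1 (2 ^ p)) (max 1 (2 ^ p)) := by
  obtain ⟨hs0, hs1⟩ := hs
  rcases le_total 0 p with hp | hp
  · exact ⟨(min_le_left _ _).trans (one_le_rpow (by linarith) hp),
      (rpow_le_rpow (by linarith) (by linarith) hp).trans (le_max_right _ _)⟩
  · exact ⟨(min_le_right _ _).trans (rpow_le_rpow_of_nonpos (by linarith) (by linarith) hp),
      (rpow_le_one_of_one_le_of_nonpos (by linarith) hp).trans (le_max_left _ _)⟩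

section JacobiWeight

variable {p : ℝ}

lemma integral_one_sub_sq_rpow_mul_eq_integral_rpow_mul {h : ℝ → ℝ} :
    ∫ s in 0..1, (1 - s ^ 2) ^ p * h s = ∫ u in 0..1, u ^ p * ((1 + (1 - u)) ^ p * h (1 - u)) := by
  have hsub := intervalIntegral.integral_comp_sub_left (a := 0) (b := 1)
    (fun s => (1 - s ^ 2) ^ p * h s) 1
  rw [sub_zero, sub_self] at hsub
  rw [← hsub]
  refine intervalIntegral.integral_congr fun u hu => ?_
  rw [uIcc_of_le zero_le_one] at hu
  rw [← mul_assoc, ← mul_rpow hu.1 (by linarith [hu.2])]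
  ring_nf

lemma intervalIntegrable_one_sub_sq_rpow_mul (hp : -1 < p) {h : ℝ → ℝ}
    (hh : ContinuousOn h (Icc 0 1)) :
    IntervalIntegrable (fun s => (1 - s ^ 2) ^ p * h s) volume 0 1 := by
  have hsub : IntervalIntegrable (fun s : ℝ => (1 - s) ^ p) volume 0 1 := by
    simpa using
      ((intervalIntegral.intervalIntegrable_rpow' (a := 0) (b := 1) hp).comp_sub_left 1).symm
  have hcont : ContinuousOn (fun s : ℝ => (1 + s) ^ p * h s) (uIcc 0 1) := by
    rw [uIcc_of_le zero_le_one]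
    refine ContinuousOn.mul (ContinuousOn.rpow_const (by fun_prop) fun s hs => ?_) hh
    exact Or.inl (by linarith [hs.1])
  refine (intervalIntegrable_congr fun s hs => ?_).1 (hsub.mul_continuousOn hcont)
  rw [uIoc_of_le zero_le_one] at hs
  rw [← mul_assoc, ← mul_rpow (by linarith [hs.2]) (by linarith [hs.1])]
  ring_nf

lemma integral_neg_one_one_eq_integral_zero_one_add {f : ℝ → ℝ}
    (hf : IntervalIntegrable f volume 0 1) (hf' : IntervalIntegrable (fun s => f (-s)) volume 0 1) :
    ∫ s in (-1)..1, f s = ∫ s in 0..1, (f s + f (-s)) := by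
  have hf_neg : IntervalIntegrable f volume (-1) 0 :=
    (IntervalIntegrable.iff_comp_neg (a := -1) (b := 0)).2 (by simpa using hf'.symm)
  rw [intervalIntegral.integral_add hf hf', intervalIntegral.integral_comp_neg, neg_zero,
    ← intervalIntegral.integral_add_adjacent_intervals hf_neg hf, add_comm]

lemma integral_neg_one_one_one_sub_sq_rpow_mul_mem_Icc (hp : -1 < p) {h : ℝ → ℝ}
    (hh : ContinuousOn h (Icc (-1) 1)) (h0 : ∀ s ∈ Icc (-1 : ℝ) 1, 0 ≤ h s)
    (hsymm : ∀ s ∈ Icc (0 : ℝ) 1, h (-s) ≤ h s) :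
    ∫ s in (-1)..1, (1 - s ^ 2) ^ p * h s ∈
      Icc (∫ s in 0..1, (1 - s ^ 2) ^ p * h s) (2 * ∫ s in 0..1, (1 - s ^ 2) ^ p * h s) := by
  have hI : IntervalIntegrable (fun s => (1 - s ^ 2) ^ p * h s) volume 0 1 :=
    intervalIntegrable_one_sub_sq_rpow_mul hp (hh.mono (Icc_subset_Icc (by norm_num) le_rfl))
  have hI' : IntervalIntegrable (fun s => (1 - s ^ 2) ^ p * h (-s)) volume 0 1 :=
    intervalIntegrable_one_sub_sq_rpow_mul hp (hh.comp continuousOn_neg fun s hs =>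
      ⟨by linarith [hs.2], by linarith [hs.1]⟩)
  have hw : ∀ s ∈ Icc (0 : ℝ) 1, 0 ≤ (1 - s ^ 2) ^ p := fun s hs =>
    rpow_nonneg (by nlinarith [hs.1, hs.2]) p
  rw [integral_neg_one_one_eq_integral_zero_one_add hI (by simpa using hI'), two_mul,
    ← intervalIntegral.integral_add hI hI]
  constructor
  · refine intervalIntegral.integral_mono_on zero_le_one hI (by simpa using hI.add hI')
      fun s hs => ?_
    have := mul_nonneg (hw s hs) (h0 (-s) ⟨by linarith [hs.2], by linarith [hs.1]⟩)
    simp only [neg_sq]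
    linarith
  · refine intervalIntegral.integral_mono_on zero_le_one (by simpa using hI.add hI') (hI.add hI)
      fun s hs => ?_
    simp only [neg_sq]
    gcongr
    exacts [hw s hs, hsymm s hs]

lemma integral_zero_one_one_sub_sq_rpow_mul_mem_Icc (hp : -1 < p) {h : ℝ → ℝ}
    (hh : ContinuousOn h (Icc 0 1)) (h0 : ∀ s ∈ Icc (0 : ℝ) 1, 0 ≤ h s) :
    ∫ s in 0..1, (1 - s ^ 2) ^ p * h s ∈
      Icc (min 1 (2 ^ p) * ∫ u in 0..1, u ^ p * h (1 - u))
        (max 1 (2 ^ p) * ∫ u in 0..1, u ^ p * h (1 - u)) := by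
  have hmaps : MapsTo (fun u : ℝ => 1 - u) (uIcc 0 1) (Icc 0 1) := fun u hu => by
    rw [uIcc_of_le zero_le_one] at hu
    exact ⟨by linarith [hu.2], by linarith [hu.1]⟩
  have hcomp : ContinuousOn (fun u => h (1 - u)) (uIcc 0 1) := hh.comp (by fun_prop) hmaps
  have hrpow := intervalIntegral.intervalIntegrable_rpow' (a := 0) (b := 1) hp
  have hI := hrpow.mul_continuousOn hcomp
  have hI' := hrpow.mul_continuousOn (f := fun u => u ^ p)
    (g := fun u => (1 + (1 - u)) ^ p * h (1 - u))
    (ContinuousOn.mul (ContinuousOn.rpow_const (by fun_prop) fun u hu => Or.inl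
      (by linarith [(hmaps hu).1])) hcomp)
  rw [integral_one_sub_sq_rpow_mul_eq_integral_rpow_mul, ← intervalIntegral.integral_const_mul,
    ← intervalIntegral.integral_const_mul]
  have hw : ∀ u ∈ Icc (0 : ℝ) 1, 0 ≤ u ^ p * h (1 - u) := fun u hu =>
    mul_nonneg (rpow_nonneg hu.1 p) (h0 _ (hmaps (by rwa [uIcc_of_le zero_le_one])))
  constructor
  · refine intervalIntegral.integral_mono_on zero_le_one (hI.const_mul _) hI' fun u hu => ?_
    have := one_add_rpow_mem_Icc (hmaps (by rwa [uIcc_of_le zero_le_one]) : 1 - u ∈ Icc 0 1) p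
    calc min 1 (2 ^ p) * (u ^ p * h (1 - u)) ≤ (1 + (1 - u)) ^ p * (u ^ p * h (1 - u)) := by
          gcongr
          exacts [hw u hu, this.1]
      _ = _ := by ring
  · refine intervalIntegral.integral_mono_on zero_le_one hI' (hI.const_mul _) fun u hu => ?_
    have := one_add_rpow_mem_Icc (hmaps (by rwa [uIcc_of_le zero_le_one]) : 1 - u ∈ Icc 0 1) p
    calc u ^ p * ((1 + (1 - u)) ^ p * h (1 - u)) = (1 + (1 - u)) ^ p * (u ^ p * h (1 - u)) := by
          ring
      _ ≤ max 1 (2 ^ p) * (u ^ p * h (1 - u)) := by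
          gcongr
          exacts [hw u hu, this.2]

end JacobiWeight

section Kernel

variable {p κ γ B A D : ℝ}

lemma continuousOn_kernel (hB : 0 < B) (hBA : B < A) (hAD : A < D) (κ γ : ℝ) :
    ContinuousOn (fun s => (D - B * s) ^ (-κ) * (A - B * s) ^ (-γ)) (Icc (-1) 1) := by
  refine ContinuousOn.mul (ContinuousOn.rpow_const (by fun_prop) fun s hs => Or.inl ?_)
    (ContinuousOn.rpow_const (by fun_prop) fun s hs => Or.inl ?_) <;>
  nlinarith [hs.2]

lemma kernel_nonneg (hB : 0 ≤ B) (hBA : B < A) (hAD : A < D) {s : ℝ} (hs : s ≤ 1) :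
    0 ≤ (D - B * s) ^ (-κ) * (A - B * s) ^ (-γ) :=
  mul_nonneg (rpow_nonneg (by nlinarith) _) (rpow_nonneg (by nlinarith) _)

lemma kernel_neg_le (hκ : 0 ≤ κ) (hγ : 0 ≤ γ) (hB : 0 ≤ B) (hBA : B < A) (hAD : A < D) {s : ℝ}
    (hs : s ∈ Icc (0 : ℝ) 1) :
    (D - B * -s) ^ (-κ) * (A - B * -s) ^ (-γ) ≤ (D - B * s) ^ (-κ) * (A - B * s) ^ (-γ) := by
  obtain ⟨hs0, hs1⟩ := hs
  have hBs : 0 ≤ B * s := mul_nonneg hB hs0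
  have hBs1 : B * s ≤ B := by nlinarith
  exact mul_le_mul (rpow_le_rpow_of_nonpos (by linarith) (by linarith) (by linarith))
    (rpow_le_rpow_of_nonpos (by linarith) (by linarith) (by linarith))
    (rpow_nonneg (by linarith) _) (rpow_nonneg (by linarith) _)

lemma le_kernel_one_sub (hκ : 0 ≤ κ) (hγ : 0 ≤ γ) (hB : 0 ≤ B) (hBA : B < A) (hAD : A < D)
    {u : ℝ} (hu : 0 ≤ u) :
    (D - B) ^ (-κ) * (A - B) ^ (-γ) * (1 + A / (A - B) * u) ^ (-(κ + γ))
      ≤ (D - B * (1 - u)) ^ (-κ) * (A - B * (1 - u)) ^ (-γ) := by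
  have ht : 0 < A - B := sub_pos.2 hBA
  have hr : (A - B) * (A / (A - B)) = A := by field_simp
  have hru0 : 0 ≤ A / (A - B) * u := mul_nonneg (div_nonneg (by linarith) ht.le) hu
  have hru : 0 < 1 + A / (A - B) * u := by linarith
  have hD : D - B * (1 - u) ≤ (D - B) * (1 + A / (A - B) * u) := by
    nlinarith [mul_le_mul_of_nonneg_right hAD.le hru0]
  have hA : A - B * (1 - u) ≤ (A - B) * (1 + A / (A - B) * u) := by nlinarith
  calc (D - B) ^ (-κ) * (A - B) ^ (-γ) * (1 + A / (A - B) * u) ^ (-(κ + γ))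
      = ((D - B) * (1 + A / (A - B) * u)) ^ (-κ) * ((A - B) * (1 + A / (A - B) * u)) ^ (-γ) := by
        rw [mul_rpow (by linarith) hru.le, mul_rpow ht.le hru.le, neg_add, rpow_add hru]
        ring
    _ ≤ (D - B * (1 - u)) ^ (-κ) * (A - B * (1 - u)) ^ (-γ) :=
        mul_le_mul (rpow_le_rpow_of_nonpos (by nlinarith) hD (by linarith))
          (rpow_le_rpow_of_nonpos (by nlinarith) hA (by linarith))
          (rpow_nonneg (by positivity) _) (rpow_nonneg (by nlinarith) _)

lemma kernel_one_sub_le (hκ : 0 ≤ κ) (hγ : 0 ≤ γ) (hB : 0 ≤ B) (hBA : B < A) (hAD : A < D)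
    {u : ℝ} (hu : u ∈ Icc (0 : ℝ) 1) :
    (D - B * (1 - u)) ^ (-κ) * (A - B * (1 - u)) ^ (-γ)
      ≤ 2 ^ γ * ((D - B) ^ (-κ) * (A - B) ^ (-γ)) * (1 + A / (A - B) * u) ^ (-γ) := by
  obtain ⟨hu0, hu1⟩ := hu
  have ht : 0 < A - B := sub_pos.2 hBA
  have hru0 : 0 ≤ A / (A - B) * u := mul_nonneg (div_nonneg (by linarith) ht.le) hu0
  have hr : (A - B) * (A / (A - B)) = A := by field_simp
  have hru : 0 < 1 + A / (A - B) * u := by linarith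
  have hA : 2⁻¹ * ((A - B) * (1 + A / (A - B) * u)) ≤ A - B * (1 - u) := by nlinarith
  calc (D - B * (1 - u)) ^ (-κ) * (A - B * (1 - u)) ^ (-γ)
      ≤ (D - B) ^ (-κ) * (2⁻¹ * ((A - B) * (1 + A / (A - B) * u))) ^ (-γ) :=
        mul_le_mul (rpow_le_rpow_of_nonpos (by linarith) (by nlinarith) (by linarith))
          (rpow_le_rpow_of_nonpos (by positivity) hA (by linarith))
          (rpow_nonneg (by nlinarith) _) (rpow_nonneg (by linarith) _)
    _ = 2 ^ γ * ((D - B) ^ (-κ) * (A - B) ^ (-γ)) * (1 + A / (A - B) * u) ^ (-γ) := by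
        rw [mul_rpow (by norm_num) (by positivity), mul_rpow ht.le hru.le,
          inv_rpow zero_le_two, rpow_neg zero_le_two, inv_inv]
        ring

lemma intervalIntegrable_rpow_mul_kernel_one_sub (hp : -1 < p) (hB : 0 < B) (hBA : B < A)
    (hAD : A < D) (κ γ : ℝ) :
    IntervalIntegrable
      (fun u => u ^ p * ((D - B * (1 - u)) ^ (-κ) * (A - B * (1 - u)) ^ (-γ))) volume 0 1 :=
  (intervalIntegral.intervalIntegrable_rpow' hp).mul_continuousOn
    ((continuousOn_kernel hB hBA hAD κ γ).comp (by fun_prop) fun u hu => by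
      rw [uIcc_of_le zero_le_one] at hu
      exact ⟨by linarith [hu.2], by linarith [hu.1]⟩)

lemma le_integral_rpow_mul_kernel_one_sub (hp : -1 < p) (hκ : 0 ≤ κ) (hγ : 0 ≤ γ)
    (hB : 0 < B) (hBA : B < A) (hAD : A < D) :
    (∫ v in 0..1, v ^ p * (1 + v) ^ (-(κ + γ)))
        * ((D - B) ^ (-κ) * (A - B) ^ (-γ) * (A / (A - B)) ^ (-(p + 1)))
      ≤ ∫ u in 0..1, u ^ p * ((D - B * (1 - u)) ^ (-κ) * (A - B * (1 - u)) ^ (-γ)) := by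
  have ht : 0 < A - B := sub_pos.2 hBA
  have hr : 1 ≤ A / (A - B) := (one_le_div ht).2 (by linarith)
  have hM : 0 ≤ (D - B) ^ (-κ) * (A - B) ^ (-γ) :=
    mul_nonneg (rpow_nonneg (by linarith) _) (rpow_nonneg ht.le _)
  calc (∫ v in 0..1, v ^ p * (1 + v) ^ (-(κ + γ)))
        * ((D - B) ^ (-κ) * (A - B) ^ (-γ) * (A / (A - B)) ^ (-(p + 1)))
      = (D - B) ^ (-κ) * (A - B) ^ (-γ)
          * ((A / (A - B)) ^ (-(p + 1)) * ∫ v in 0..1, v ^ p * (1 + v) ^ (-(κ + γ))) := by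
        ring
    _ ≤ (D - B) ^ (-κ) * (A - B) ^ (-γ)
          * ∫ u in 0..1, u ^ p * (1 + A / (A - B) * u) ^ (-(κ + γ)) := by
        gcongr
        exact le_integral_rpow_mul_one_add_mul_rpow hp _ hr
    _ ≤ _ := by
        rw [← intervalIntegral.integral_const_mul]
        refine intervalIntegral.integral_mono_on zero_le_one
          ((intervalIntegrable_rpow_mul_one_add_mul_rpow hp (zero_le_one.trans hr) _
            zero_le_one).const_mul _)
          (intervalIntegrable_rpow_mul_kernel_one_sub hp hB hBA hAD κ γ) fun u hu => ?_
        calc (D - B) ^ (-κ) * (A - B) ^ (-γ) * (u ^ p * (1 + A / (A - B) * u) ^ (-(κ + γ)))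
            = u ^ p * ((D - B) ^ (-κ) * (A - B) ^ (-γ) * (1 + A / (A - B) * u) ^ (-(κ + γ))) := by
              ring
          _ ≤ _ := mul_le_mul_of_nonneg_left (le_kernel_one_sub hκ hγ hB.le hBA hAD hu.1)
              (rpow_nonneg hu.1 p)

lemma integral_rpow_mul_kernel_one_sub_le (hp : -1 < p) (hκ : 0 ≤ κ) (hγ : p + 1 < γ)
    (hB : 0 < B) (hBA : B < A) (hAD : A < D) :
    ∫ u in 0..1, u ^ p * ((D - B * (1 - u)) ^ (-κ) * (A - B * (1 - u)) ^ (-γ))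
      ≤ 2 ^ γ * (∫ v in Ioi 0, v ^ p * (1 + v) ^ (-γ))
          * ((D - B) ^ (-κ) * (A - B) ^ (-γ) * (A / (A - B)) ^ (-(p + 1))) := by
  have ht : 0 < A - B := sub_pos.2 hBA
  have hr : 0 < A / (A - B) := div_pos (hB.trans hBA) ht
  calc ∫ u in 0..1, u ^ p * ((D - B * (1 - u)) ^ (-κ) * (A - B * (1 - u)) ^ (-γ))
      ≤ ∫ u in 0..1, 2 ^ γ * ((D - B) ^ (-κ) * (A - B) ^ (-γ))
          * (u ^ p * (1 + A / (A - B) * u) ^ (-γ)) := by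
        refine intervalIntegral.integral_mono_on zero_le_one
          (intervalIntegrable_rpow_mul_kernel_one_sub hp hB hBA hAD κ γ)
          ((intervalIntegrable_rpow_mul_one_add_mul_rpow hp hr.le _ zero_le_one).const_mul _)
          fun u hu => ?_
        calc u ^ p * ((D - B * (1 - u)) ^ (-κ) * (A - B * (1 - u)) ^ (-γ))
            ≤ u ^ p * (2 ^ γ * ((D - B) ^ (-κ) * (A - B) ^ (-γ))
                * (1 + A / (A - B) * u) ^ (-γ)) :=
              mul_le_mul_of_nonneg_left (kernel_one_sub_le hκ (by linarith) hB.le hBA hAD hu)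
                (rpow_nonneg hu.1 p)
          _ = _ := by ring
    _ ≤ 2 ^ γ * ((D - B) ^ (-κ) * (A - B) ^ (-γ))
          * ((A / (A - B)) ^ (-(p + 1)) * ∫ v in Ioi 0, v ^ p * (1 + v) ^ (-γ)) := by
        rw [intervalIntegral.integral_const_mul]
        have hM : 0 ≤ (D - B) ^ (-κ) * (A - B) ^ (-γ) :=
          mul_nonneg (rpow_nonneg (by linarith) _) (rpow_nonneg ht.le _)
        gcongr
        exact integral_rpow_mul_one_add_mul_rpow_le hp hγ hr
    _ = _ := by ring

end Kernel

theorem exists_bounds_integral_one_sub_sq_rpow_mul_kernel {p κ γ : ℝ} (hp : -1 < p)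
    (hκ : 0 ≤ κ) (hγ : p + 1 < γ) :
    ∃ c C : ℝ, 0 < c ∧ 0 < C ∧ ∀ B A D : ℝ, 0 < B → B < A → A < D →
      c ≤ (∫ s in (-1)..1, (1 - s ^ 2) ^ p * ((D - B * s) ^ (-κ) * (A - B * s) ^ (-γ))) *
            ((D - B) ^ κ * A ^ (p + 1) * (A - B) ^ (γ - (p + 1))) ∧
      (∫ s in (-1)..1, (1 - s ^ 2) ^ p * ((D - B * s) ^ (-κ) * (A - B * s) ^ (-γ))) *
            ((D - B) ^ κ * A ^ (p + 1) * (A - B) ^ (γ - (p + 1))) ≤ C := by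
  set c₀ := ∫ v in 0..1, v ^ p * (1 + v) ^ (-(κ + γ))
  set C₀ := ∫ v in Ioi (0 : ℝ), v ^ p * (1 + v) ^ (-γ)
  have hc₀ : 0 < c₀ := integral_rpow_mul_one_add_rpow_pos hp _
  have hC₀ : 0 < C₀ := (integral_rpow_mul_one_add_rpow_pos hp γ).trans_le
    (integral_rpow_mul_one_add_rpow_le_integral_Ioi hp hγ zero_le_one)
  refine ⟨min 1 (2 ^ p) * c₀, 2 * max 1 (2 ^ p) * 2 ^ γ * C₀, by positivity, by positivity,
    fun B A D hB hBA hAD => ?_⟩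
  have hcont := continuousOn_kernel hB hBA hAD κ γ
  obtain ⟨hIJ, hJI⟩ := integral_neg_one_one_one_sub_sq_rpow_mul_mem_Icc hp hcont
    (fun s hs => kernel_nonneg hB.le hBA hAD hs.2)
    (fun s hs => kernel_neg_le hκ (by linarith) hB.le hBA hAD hs)
  obtain ⟨hLJ, hJL⟩ := integral_zero_one_one_sub_sq_rpow_mul_mem_Icc hp
    (hcont.mono (Icc_subset_Icc (by norm_num) le_rfl))
    (fun s hs => kernel_nonneg hB.le hBA hAD hs.2)
  have hNL := le_integral_rpow_mul_kernel_one_sub hp hκ (by linarith : 0 ≤ γ) hB hBA hAD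
  have hLN := integral_rpow_mul_kernel_one_sub_le hp hκ hγ hB hBA hAD
  set I := ∫ s in (-1)..1, (1 - s ^ 2) ^ p * ((D - B * s) ^ (-κ) * (A - B * s) ^ (-γ))
  set J := ∫ s in 0..1, (1 - s ^ 2) ^ p * ((D - B * s) ^ (-κ) * (A - B * s) ^ (-γ))
  set L := ∫ u in 0..1, u ^ p * ((D - B * (1 - u)) ^ (-κ) * (A - B * (1 - u)) ^ (-γ))
  set N := (D - B) ^ (-κ) * (A - B) ^ (-γ) * (A / (A - B)) ^ (-(p + 1))
  set P := (D - B) ^ κ * A ^ (p + 1) * (A - B) ^ (γ - (p + 1))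
  have ht : 0 < A - B := sub_pos.2 hBA
  have hA : 0 < A := hB.trans hBA
  have hD : 0 < D - B := by linarith
  have hP : 0 < P := by positivity
  have hNP : N * P = 1 := by
    simp only [N, P, rpow_neg hD.le, rpow_neg ht.le, rpow_neg (div_pos hA ht).le,
      div_rpow hA.le ht.le, rpow_sub ht]
    field_simp
  constructor
  · calc min 1 (2 ^ p) * c₀ = min 1 (2 ^ p) * (c₀ * N) * P := by
          rw [mul_assoc, mul_assoc, hNP, mul_one]
      _ ≤ min 1 (2 ^ p) * L * P := by gcongr
      _ ≤ J * P := by gcongr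
      _ ≤ I * P := by gcongr
  · calc I * P ≤ 2 * (max 1 (2 ^ p) * L) * P := by gcongr; exact hJI.trans (by gcongr)
      _ ≤ 2 * (max 1 (2 ^ p) * (2 ^ γ * C₀ * N)) * P := by gcongr
      _ = 2 * max 1 (2 ^ p) * 2 ^ γ * C₀ * (N * P) := by ring
      _ = 2 * max 1 (2 ^ p) * 2 ^ γ * C₀ := by rw [hNP, mul_one]

lemma Gamma_div_sqrt_pi_mul_Gamma_pos {ν : ℝ} (hν : -1/2 < ν) :
    0 < Real.Gamma (ν + 1) / (Real.sqrt π * Real.Gamma (ν + 1/2)) :=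
  div_pos (Gamma_pos_of_pos (by linarith))
    (mul_pos (sqrt_pos.2 pi_pos) (Gamma_pos_of_pos (by linarith)))

lemma integral_jacobiPi {ν : ℝ} (hν : -1/2 < ν) (f : ℝ → ℝ) :
    ∫ s, f s ∂jacobiPi ν = Real.Gamma (ν + 1) / (Real.sqrt π * Real.Gamma (ν + 1/2))
      * ∫ s in (-1)..1, (1 - s ^ 2) ^ (ν - 1/2) * f s := by
  have hc := Gamma_div_sqrt_pi_mul_Gamma_pos hν
  rw [jacobiPi, if_neg hν.ne', integral_withDensity_eq_integral_toReal_smul (by fun_prop)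
    (.of_forall fun _ => ENNReal.ofReal_lt_top), intervalIntegral.integral_of_le (by norm_num),
    ← integral_Icc_eq_integral_Ioc, ← integral_const_mul]
  refine setIntegral_congr_fun measurableSet_Icc fun s hs => ?_
  have hw : 0 ≤ (1 - s ^ 2) ^ (ν - 1/2) := rpow_nonneg (by nlinarith [hs.1, hs.2]) _
  rw [ENNReal.toReal_ofReal (by positivity), smul_eq_mul, mul_assoc]

lemma integral_jacobiPi_neg_half (f : ℝ → ℝ) :
    ∫ s, f s ∂jacobiPi (-1/2) = (f (-1) + f 1) / 2 := by
  rw [jacobiPi, if_pos rfl, integral_smul_measure,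
    integral_add_measure (integrable_dirac enorm_lt_top) (integrable_dirac enorm_lt_top),
    integral_dirac, integral_dirac]
  norm_num
  ring

lemma integral_jacobiPi_neg_half_kernel_mem_Icc {κ γ B A D : ℝ} (hκ : 0 ≤ κ) (hγ : 0 ≤ γ)
    (hB : 0 ≤ B) (hBA : B < A) (hAD : A < D) :
    (∫ s, (D - B * s) ^ (-κ) * (A - B * s) ^ (-γ) ∂jacobiPi (-1/2))
      * ((D - B) ^ κ * (A - B) ^ γ) ∈ Icc (1/2) 1 := by
  have ht : 0 < A - B := sub_pos.2 hBA
  have hD : 0 < D - B := by linarith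
  have hP : 0 < (D - B) ^ κ * (A - B) ^ γ := by positivity
  have hsymm := kernel_neg_le (κ := κ) (γ := γ) hκ hγ hB hBA hAD (s := 1) ⟨zero_le_one, le_rfl⟩
  have h0 : 0 ≤ (D - B * -1) ^ (-κ) * (A - B * -1) ^ (-γ) :=
    kernel_nonneg hB hBA hAD (by norm_num)
  have hnorm : (D - B * 1) ^ (-κ) * (A - B * 1) ^ (-γ) * ((D - B) ^ κ * (A - B) ^ γ) = 1 := by
    rw [mul_one, rpow_neg hD.le, rpow_neg ht.le]
    field_simp
  rw [integral_jacobiPi_neg_half]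
  have := mul_le_mul_of_nonneg_right hsymm hP.le
  have := mul_nonneg h0 hP.le
  constructor <;> linarith

/-- Lemma 5.2 (integral estimate): for κ ≥ 0, γ > ν + 1/2 ≥ 0 and 0 < B < A < D,
∫ (D-Bs)^{-κ}(A-Bs)^{-γ} dΠ_ν(s) ≃ (D-B)^{-κ} A^{-ν-1/2} (A-B)^{-(γ-ν-1/2)}. -/
theorem stmt1 (κ γ ν : ℝ) (hκ : 0 ≤ κ) (hν : 0 ≤ ν + 1/2) (hγ : ν + 1/2 < γ) :
    ∃ c C : ℝ, 0 < c ∧ 0 < C ∧ ∀ B A D : ℝ, 0 < B → B < A → A < D →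
      c ≤ (∫ s, (D - B * s) ^ (-κ) * (A - B * s) ^ (-γ) ∂(jacobiPi ν)) *
            ((D - B) ^ κ * A ^ (ν + 1/2) * (A - B) ^ (γ - ν - 1/2)) ∧
      (∫ s, (D - B * s) ^ (-κ) * (A - B * s) ^ (-γ) ∂(jacobiPi ν)) *
            ((D - B) ^ κ * A ^ (ν + 1/2) * (A - B) ^ (γ - ν - 1/2)) ≤ C := by
  rcases hν.eq_or_lt with hν | hν
  · obtain rfl : ν = -1/2 := by linarith
    refine ⟨1/2, 1, by norm_num, one_pos, fun B A D hB hBA hAD => ?_⟩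
    rw [show (-1/2 : ℝ) + 1/2 = 0 by norm_num, show γ - -1/2 - 1/2 = γ by ring, rpow_zero,
      mul_one]
    exact integral_jacobiPi_neg_half_kernel_mem_Icc hκ (by linarith) hB.le hBA hAD
  · have hν : -1/2 < ν := by linarith
    obtain ⟨c, C, hc, hC, hbounds⟩ := exists_bounds_integral_one_sub_sq_rpow_mul_kernel
      (p := ν - 1/2) (κ := κ) (γ := γ) (by linarith) hκ (by linarith)
    rw [show ν - 1/2 + 1 = ν + 1/2 by ring, show γ - (ν + 1/2) = γ - ν - 1/2 by ring] at hbounds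
    have ha := Gamma_div_sqrt_pi_mul_Gamma_pos hν
    refine ⟨_ * c, _ * C, mul_pos ha hc, mul_pos ha hC, fun B A D hB hBA hAD => ?_⟩
    obtain ⟨hlo, hhi⟩ := hbounds B A D hB hBA hAD
    rw [integral_jacobiPi hν, mul_assoc]
    exact ⟨mul_le_mul_of_nonneg_left hlo ha.le, mul_le_mul_of_nonneg_left hhi ha.le⟩
end

section
/- For α > -1, T > 0 fixed, the Laguerre heat kernel K_t^α(x,y) = (1/(2 sinh t)) exp(-(1/4) coth t (x²+y²)) (xy)^{-α} I_α(xy/(2 sinh t)) satisfies, uniformly in x, y ∈ (0, 3π/4) and 0 < t ≤ T: K_t^α(x,y) ≃≃ (t + xy)^{-α-1/2} t^{-1/2} exp(-c(x-y)²/t), i.e., there exist positive constants C, c₁, c₂ depending only on α, T such that (1/C)(t+xy)^{-α-1/2} t^{-1/2} e^{-c₁(x-y)²/t} ≤ K_t^α(x,y) ≤ C(t+xy)^{-α-1/2} t^{-1/2} e^{-c₂(x-y)²/t}. -/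
open Real

/-!
Write `σ = 2 sinh t`, `P = xy`, `z = P / σ`, so that the kernel is `σ⁻¹ e^G P^(-α) I_α(z)` with
`G = -(coth t / 4)(x² + y²) = -(coth t / 4)(x - y)² - coth t · P / 2`.

If `z ≤ 1`, then `I_α(z) ≃ z^α` and the kernel is `≃ σ^(-α-1) e^G`; since `P ≤ σ ≃ t`, also
`t + P ≃ σ`. If `z ≥ 1`, then `I_α(z) ≃ z^(-1/2) e^z` and the kernel is
`≃ σ^(-1/2) P^(-α-1/2) e^(G+z)` with `G + z = -(coth t / 4)(x - y)² - P (cosh t - 1) / σ`; since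
`t ≤ σ ≤ P`, also `t + P ≃ P`. In both cases the exponent is `-(coth t / 4)(x - y)²` minus a term
in `[0, cosh T + xy / 2]`, and `1 / t ≤ coth t ≤ cosh T / t` gives the Gaussian factor with
`c = 1/4` from above and `c = cosh T / 4` from below.
-/

def Comparable (R u v : ℝ) : Prop := u ≤ R * v ∧ v ≤ R * u

namespace Comparable

variable {R R' u v u' v' : ℝ}

lemma inv (h : Comparable R u v) (hu : 0 < u) (hv : 0 < v) : Comparable R u⁻¹ v⁻¹ := by
  constructor
  · rw [← div_eq_mul_inv, inv_le_iff_one_le_mul₀ hu, div_mul_eq_mul_div, one_le_div hv]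
    exact h.2
  · rw [← div_eq_mul_inv, inv_le_iff_one_le_mul₀ hv, div_mul_eq_mul_div, one_le_div hu]
    exact h.1

lemma rpow_of_nonneg (h : Comparable R u v) (hR : 0 ≤ R) (hu : 0 ≤ u) (hv : 0 ≤ v) {q : ℝ}
    (hq : 0 ≤ q) : Comparable (R ^ q) (u ^ q) (v ^ q) :=
  ⟨(rpow_le_rpow hu h.1 hq).trans_eq (mul_rpow hR hv),
    (rpow_le_rpow hv h.2 hq).trans_eq (mul_rpow hR hu)⟩

lemma rpow (h : Comparable R u v) (hR : 0 ≤ R) (hu : 0 < u) (hv : 0 < v) (q : ℝ) :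
    Comparable (R ^ |q|) (u ^ q) (v ^ q) := by
  rcases le_total 0 q with hq | hq
  · rw [abs_of_nonneg hq]
    exact h.rpow_of_nonneg hR hu.le hv.le hq
  · have := (h.inv hu hv).rpow_of_nonneg hR (inv_nonneg.2 hu.le) (inv_nonneg.2 hv.le)
      (neg_nonneg.2 hq)
    rwa [inv_rpow hu.le, inv_rpow hv.le, ← rpow_neg hu.le, ← rpow_neg hv.le, neg_neg,
      ← abs_of_nonpos hq] at this

lemma mul (h : Comparable R u v) (h' : Comparable R' u' v') (hR : 0 ≤ R) (hu : 0 ≤ u)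
    (hv : 0 ≤ v) (hu' : 0 ≤ u') (hv' : 0 ≤ v') : Comparable (R * R') (u * u') (v * v') :=
  ⟨(mul_le_mul h.1 h'.1 hu' (mul_nonneg hR hv)).trans_eq (by ring),
    (mul_le_mul h.2 h'.2 hv' (mul_nonneg hR hu)).trans_eq (by ring)⟩

end Comparable

lemma sinh_le_mul_cosh {t : ℝ} (ht : 0 ≤ t) : sinh t ≤ t * cosh t := by
  rcases ht.eq_or_lt with rfl | ht
  · simp
  obtain ⟨c, hc, hslope⟩ := exists_hasDerivAt_eq_slope sinh cosh ht continuous_sinh.continuousOn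
    fun x _ => hasDerivAt_sinh x
  rw [sinh_zero, sub_zero, sub_zero, eq_div_iff ht.ne'] at hslope
  have hcosh : cosh c ≤ cosh t := cosh_le_cosh.2 <| by
    rw [abs_of_pos hc.1, abs_of_pos ht]; exact hc.2.le
  nlinarith

lemma cosh_sub_one_le_sinh {t : ℝ} (ht : 0 ≤ t) : cosh t - 1 ≤ sinh t := by
  have := cosh_sub_sinh t
  have : exp (-t) ≤ 1 := exp_le_one_iff.2 (neg_nonpos.2 ht)
  linarith

lemma cosh_le_cosh_of_le {t T : ℝ} (ht : 0 ≤ t) (htT : t ≤ T) : cosh t ≤ cosh T :=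
  cosh_le_cosh.2 <| by rw [abs_of_nonneg ht]; exact htT.trans (le_abs_self T)

lemma one_div_le_cosh_div_sinh {t : ℝ} (ht : 0 < t) : 1 / t ≤ cosh t / sinh t := by
  rw [div_le_div_iff₀ ht (sinh_pos_iff.2 ht), one_mul, mul_comm]
  exact sinh_le_mul_cosh ht.le

lemma cosh_div_sinh_le {t T : ℝ} (ht : 0 < t) (htT : t ≤ T) : cosh t / sinh t ≤ cosh T / t := by
  rw [div_le_div_iff₀ (sinh_pos_iff.2 ht) ht]
  exact mul_le_mul (cosh_le_cosh_of_le ht.le htT) (self_le_sinh_iff.2 ht.le) ht.le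
    (cosh_pos T).le

lemma comparable_two_mul_sinh_self {t T : ℝ} (ht : 0 < t) (htT : t ≤ T) :
    Comparable (2 * cosh T) (2 * sinh t) t := by
  have hs := sinh_le_mul_cosh ht.le
  have hts := self_le_sinh_iff.2 ht.le
  have hch := cosh_le_cosh_of_le ht.le htT
  have := one_le_cosh T
  constructor <;> nlinarith

lemma gaussian_exponent_bounds {t c κ r ρ d : ℝ} (hκ : 1 / t ≤ κ) (hκc : κ ≤ c / t) (hr : 0 ≤ r)
    (hrρ : r ≤ ρ) :
    -(κ / 4) * d ^ 2 - r ≤ -(1 / 4) * d ^ 2 / t ∧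
      -(c / 4) * d ^ 2 / t - ρ ≤ -(κ / 4) * d ^ 2 - r := by
  have h₁ := mul_le_mul_of_nonneg_right hκ (sq_nonneg d)
  have h₂ := mul_le_mul_of_nonneg_right hκc (sq_nonneg d)
  rw [show -(1 / 4) * d ^ 2 / t = -(1 / 4) * (1 / t * d ^ 2) by ring,
    show -(c / 4) * d ^ 2 / t = -(1 / 4) * (c / t * d ^ 2) by ring]
  constructor <;> linarith

lemma one_div_mul_rpow_neg_mul_div_rpow {σ P a : ℝ} (hσ : 0 < σ) (hP : 0 < P) :
    1 / σ * P ^ (-a) * (P / σ) ^ a = σ ^ (-a - 1 / 2) * σ ^ (-(1 / 2 : ℝ)) := by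
  rw [div_rpow hP.le hσ.le, ← rpow_add hσ, show -a - 1 / 2 + -(1 / 2) = -a - 1 by ring,
    rpow_sub hσ, rpow_neg hP.le, rpow_neg hσ.le, rpow_one]
  have := (rpow_pos_of_pos hP a).ne'
  field_simp

lemma one_div_mul_rpow_neg_mul_div_rpow_neg_half {σ P a : ℝ} (hσ : 0 < σ) (hP : 0 < P) :
    1 / σ * P ^ (-a) * (P / σ) ^ (-(1 / 2 : ℝ)) = P ^ (-a - 1 / 2) * σ ^ (-(1 / 2 : ℝ)) := by
  have hsq : σ ^ (1 / 2 : ℝ) * σ ^ (1 / 2 : ℝ) = σ := by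
    rw [← rpow_add hσ]; norm_num
  simp only [div_rpow hP.le hσ.le, rpow_sub hP, rpow_neg hσ.le, rpow_neg hP.le]
  nth_rewrite 1 [← hsq]
  have := (rpow_pos_of_pos hP a).ne'
  have := (rpow_pos_of_pos hP (1 / 2)).ne'
  have := (rpow_pos_of_pos hσ (1 / 2)).ne'
  field_simp

lemma comparable_two_mul_sinh_add_of_le {t T P : ℝ} (ht : 0 < t) (htT : t ≤ T) (hP : 0 ≤ P)
    (hPs : P ≤ 2 * sinh t) : Comparable (2 * cosh T) (2 * sinh t) (t + P) := by
  have hσt := comparable_two_mul_sinh_self ht htT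
  have hts := self_le_sinh_iff.2 ht.le
  have := one_le_cosh T
  constructor <;> nlinarith [hσt.1]

lemma comparable_add_of_two_mul_sinh_le {t T P : ℝ} (ht : 0 ≤ t) (hsP : 2 * sinh t ≤ P) :
    Comparable (2 * cosh T) P (t + P) := by
  have hts := self_le_sinh_iff.2 ht
  have := one_le_cosh T
  constructor <;> nlinarith

lemma bounds_of_comparable {A Y J V W Φ φ₁ φ₂ L k₁ k₂ R C : ℝ} (hk₁ : 0 < k₁) (hk₂ : 0 ≤ k₂)
    (hC : 0 < C) (hC₂ : k₂ * R ≤ C) (hC₁ : R * exp L ≤ k₁ * C)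
    (hY : k₁ * J ≤ Y ∧ Y ≤ k₂ * J) (hA : 0 ≤ A) (hAJ : A * J = V * exp Φ) (hV : 0 ≤ V)
    (hW : 0 ≤ W) (hR : 0 ≤ R) (hVW : Comparable R V W) (hΦ₂ : Φ ≤ φ₂) (hΦ₁ : φ₁ - L ≤ Φ) :
    A * Y ≤ C * W * exp φ₂ ∧ 1 / C * W * exp φ₁ ≤ A * Y := by
  have hAJ₁ : k₁ * (V * exp Φ) ≤ A * Y := by
    rw [← hAJ, mul_left_comm]; exact mul_le_mul_of_nonneg_left hY.1 hA
  have hAJ₂ : A * Y ≤ k₂ * (V * exp Φ) := by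
    rw [← hAJ, mul_left_comm]; exact mul_le_mul_of_nonneg_left hY.2 hA
  constructor
  · calc A * Y ≤ k₂ * (V * exp Φ) := hAJ₂
      _ ≤ k₂ * (R * W * exp φ₂) := by gcongr; exact hVW.1
      _ = k₂ * R * W * exp φ₂ := by ring
      _ ≤ C * W * exp φ₂ := by gcongr
  · rw [one_div_mul_eq_div, div_mul_eq_mul_div, div_le_iff₀ hC]
    refine le_of_mul_le_mul_left ?_ hk₁
    calc k₁ * (W * exp φ₁) ≤ k₁ * (R * V * exp (Φ + L)) := by
          gcongr
          · exact hVW.2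
          · linarith
      _ = R * exp L * (k₁ * (V * exp Φ)) := by rw [exp_add]; ring
      _ ≤ k₁ * C * (A * Y) := by gcongr
      _ = k₁ * (A * Y * C) := by ring

noncomputable def laguerreHeatKernel (a : ℝ) (I : ℝ → ℝ) (t x y : ℝ) : ℝ :=
  1 / (2 * sinh t) * exp (-(1 / 4) * (cosh t / sinh t) * (x ^ 2 + y ^ 2)) * (x * y) ^ (-a) *
    I (x * y / (2 * sinh t))

theorem laguerreHeatKernel_bounds {a T β k₁ k₂ C x y t : ℝ} {I : ℝ → ℝ} (hk₁ : 0 < k₁)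
    (hk₂ : 0 ≤ k₂) (hI0 : ∀ z : ℝ, 0 < z → z ≤ 1 → k₁ * z ^ a ≤ I z ∧ I z ≤ k₂ * z ^ a)
    (hIinf : ∀ z : ℝ, 1 ≤ z →
      k₁ * z ^ (-(1 / 2 : ℝ)) * exp z ≤ I z ∧ I z ≤ k₂ * z ^ (-(1 / 2 : ℝ)) * exp z)
    (hC : 0 < C) (hC₂ : k₂ * ((2 * cosh T) ^ |-a - 1 / 2| * (2 * cosh T) ^ |-(1 / 2 : ℝ)|) ≤ C)
    (hC₁ : (2 * cosh T) ^ |-a - 1 / 2| * (2 * cosh T) ^ |-(1 / 2 : ℝ)| * exp (cosh T + β / 2) ≤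
      k₁ * C)
    (hx : 0 < x) (hy : 0 < y) (hxy : x * y ≤ β) (ht : 0 < t) (htT : t ≤ T) :
    laguerreHeatKernel a I t x y ≤
        C * ((t + x * y) ^ (-a - 1 / 2) * t ^ (-(1 / 2 : ℝ))) * exp (-(1 / 4) * (x - y) ^ 2 / t) ∧
      1 / C * ((t + x * y) ^ (-a - 1 / 2) * t ^ (-(1 / 2 : ℝ))) *
          exp (-(cosh T / 4) * (x - y) ^ 2 / t) ≤ laguerreHeatKernel a I t x y := by
  set σ := 2 * sinh t with hσdef
  set P := x * y with hPdef
  set κ := cosh t / sinh t with hκdef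
  have hσ : 0 < σ := mul_pos two_pos (sinh_pos_iff.2 ht)
  have hP : 0 < P := mul_pos hx hy
  have hβ : 0 ≤ β := hP.le.trans hxy
  have hM : 0 ≤ 2 * cosh T := by positivity
  have hσt := (comparable_two_mul_sinh_self ht htT).rpow hM hσ ht (-(1 / 2 : ℝ))
  have hκ₁ := one_div_le_cosh_div_sinh ht
  have hκ₂ := cosh_div_sinh_le ht htT
  have hK : laguerreHeatKernel a I t x y =
      1 / σ * P ^ (-a) * exp (-(1 / 4) * κ * (x ^ 2 + y ^ 2)) * I (P / σ) := by
    unfold laguerreHeatKernel; ring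
  have hG : -(1 / 4) * κ * (x ^ 2 + y ^ 2) = -(κ / 4) * (x - y) ^ 2 - κ * P / 2 := by
    rw [hPdef]; ring
  rw [hK]
  rcases le_total P σ with hPσ | hσP
  · have hr : κ * P / 2 ≤ cosh T + β / 2 := by
      have : κ * P / 2 ≤ cosh t := by
        rw [hκdef, div_mul_eq_mul_div, div_div, div_le_iff₀ (by positivity)]
        nlinarith [cosh_pos t]
      linarith [cosh_le_cosh_of_le ht.le htT]
    have hΦ := gaussian_exponent_bounds (d := x - y) hκ₁ hκ₂ (by positivity) hr
    rw [← hG] at hΦ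
    exact bounds_of_comparable (Φ := -(1 / 4) * κ * (x ^ 2 + y ^ 2)) hk₁ hk₂ hC hC₂ hC₁
      (hI0 _ (div_pos hP hσ) ((div_le_one hσ).2 hPσ)) (by positivity)
      (by rw [mul_right_comm, one_div_mul_rpow_neg_mul_div_rpow hσ hP]) (by positivity)
      (by positivity) (by positivity)
      (((comparable_two_mul_sinh_add_of_le ht htT hP.le hPσ).rpow hM hσ (by positivity) _).mul
        hσt (by positivity) (by positivity) (by positivity) (by positivity) (by positivity))
      hΦ.1 hΦ.2
  · have hr : P * (cosh t - 1) / σ ≤ cosh T + β / 2 := by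
      rw [div_le_iff₀ hσ]
      nlinarith [cosh_sub_one_le_sinh ht.le, one_le_cosh T]
    have hΦ := gaussian_exponent_bounds (d := x - y) hκ₁ hκ₂
      (div_nonneg (mul_nonneg hP.le (sub_nonneg.2 (one_le_cosh t))) hσ.le) hr
    have hGz : -(1 / 4) * κ * (x ^ 2 + y ^ 2) + P / σ =
        -(κ / 4) * (x - y) ^ 2 - P * (cosh t - 1) / σ := by
      rw [hG, hκdef, hσdef]; field_simp; ring
    rw [← hGz] at hΦ
    exact bounds_of_comparable (Φ := -(1 / 4) * κ * (x ^ 2 + y ^ 2) + P / σ) hk₁ hk₂ hC hC₂ hC₁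
      (by simpa only [mul_assoc] using hIinf _ ((one_le_div hσ).2 hσP)) (by positivity)
      (by rw [exp_add, ← one_div_mul_rpow_neg_mul_div_rpow_neg_half hσ hP]; ring) (by positivity)
      (by positivity) (by positivity)
      (((comparable_add_of_two_mul_sinh_le ht.le hσP).rpow hM hP (by positivity) _).mul
        hσt (by positivity) (by positivity) (by positivity) (by positivity) (by positivity))
      hΦ.1 hΦ.2

theorem stmt17_general (a T : ℝ)
    (I : ℝ → ℝ) (k₁ k₂ : ℝ) (hk₁ : 0 < k₁) (hk₂ : 0 < k₂)
    (hI0 : ∀ z : ℝ, 0 < z → z ≤ 1 → k₁ * z ^ a ≤ I z ∧ I z ≤ k₂ * z ^ a)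
    (hIinf : ∀ z : ℝ, 1 ≤ z →
      k₁ * z ^ (-(1/2 : ℝ)) * Real.exp z ≤ I z ∧ I z ≤ k₂ * z ^ (-(1/2 : ℝ)) * Real.exp z) :
    ∃ C c₁ c₂ : ℝ, 0 < C ∧ 0 < c₁ ∧ 0 < c₂ ∧
      ∀ x y t : ℝ, x ∈ Set.Ioo 0 (3 * π / 4) → y ∈ Set.Ioo 0 (3 * π / 4) → 0 < t → t ≤ T →
        (1/C) * (t + x * y) ^ (-a - 1/2) * t ^ (-(1/2 : ℝ)) * Real.exp (-c₁ * (x - y) ^ 2 / t) ≤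
          1 / (2 * Real.sinh t) *
            Real.exp (-(1/4) * (Real.cosh t / Real.sinh t) * (x ^ 2 + y ^ 2)) *
            (x * y) ^ (-a) * I (x * y / (2 * Real.sinh t)) ∧
        1 / (2 * Real.sinh t) *
            Real.exp (-(1/4) * (Real.cosh t / Real.sinh t) * (x ^ 2 + y ^ 2)) *
            (x * y) ^ (-a) * I (x * y / (2 * Real.sinh t)) ≤
          C * (t + x * y) ^ (-a - 1/2) * t ^ (-(1/2 : ℝ)) * Real.exp (-c₂ * (x - y) ^ 2 / t) := by
  set R := (2 * cosh T) ^ |-a - 1 / 2| * (2 * cosh T) ^ |-(1 / 2 : ℝ)|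
  set L := cosh T + (3 * π / 4) ^ 2 / 2
  have hR : 0 < R := by positivity
  have hL : 1 ≤ exp L := one_le_exp (by positivity)
  refine ⟨(k₂ + k₁⁻¹) * R * exp L, cosh T / 4, 1 / 4, by positivity, by positivity, by norm_num, ?_⟩
  intro x y t hx hy ht htT
  have hxy : x * y ≤ (3 * π / 4) ^ 2 := by
    rw [sq]; exact mul_le_mul hx.2.le hy.2.le hy.1.le (by positivity)
  have hC₂ : k₂ * R ≤ (k₂ + k₁⁻¹) * R * exp L := by
    calc k₂ * R ≤ (k₂ + k₁⁻¹) * R * 1 := by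
          rw [mul_one]; gcongr; exact le_add_of_nonneg_right (inv_nonneg.2 hk₁.le)
      _ ≤ (k₂ + k₁⁻¹) * R * exp L := by gcongr
  have hC₁ : R * exp L ≤ k₁ * ((k₂ + k₁⁻¹) * R * exp L) := by
    rw [← mul_assoc, ← mul_assoc, mul_add, mul_inv_cancel₀ hk₁.ne']
    gcongr
    nlinarith [mul_pos (mul_pos hk₁ hk₂) hR]
  obtain ⟨hupper, hlower⟩ := laguerreHeatKernel_bounds hk₁ hk₂.le hI0 hIinf (by positivity) hC₂ hC₁
    hx.1 hy.1 hxy ht htT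
  exact ⟨by simpa only [laguerreHeatKernel, mul_assoc] using hlower,
    by simpa only [laguerreHeatKernel, mul_assoc] using hupper⟩

/-- Sharp estimates for the Laguerre heat kernel
K_t^α(x,y) = (2 sinh t)^{-1} exp(-(1/4)coth t (x²+y²)) (xy)^{-α} I_α(xy/(2 sinh t)),
where I_α is the modified Bessel function of the first kind (characterized here by its
standard asymptotics at 0 and ∞): uniformly in x, y ∈ (0,3π/4) and 0 < t ≤ T,
K_t^α(x,y) ≃≃ (t+xy)^{-α-1/2} t^{-1/2} exp(-c(x-y)²/t). -/
theorem stmt17 (a T : ℝ) (ha : -1 < a) (hT : 0 < T)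
    (I : ℝ → ℝ) (k₁ k₂ : ℝ) (hk₁ : 0 < k₁) (hk₂ : 0 < k₂)
    (hI0 : ∀ z : ℝ, 0 < z → z ≤ 1 → k₁ * z ^ a ≤ I z ∧ I z ≤ k₂ * z ^ a)
    (hIinf : ∀ z : ℝ, 1 ≤ z →
      k₁ * z ^ (-(1/2 : ℝ)) * Real.exp z ≤ I z ∧ I z ≤ k₂ * z ^ (-(1/2 : ℝ)) * Real.exp z) :
    ∃ C c₁ c₂ : ℝ, 0 < C ∧ 0 < c₁ ∧ 0 < c₂ ∧
      ∀ x y t : ℝ, x ∈ Set.Ioo 0 (3 * π / 4) → y ∈ Set.Ioo 0 (3 * π / 4) → 0 < t → t ≤ T →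
        (1/C) * (t + x * y) ^ (-a - 1/2) * t ^ (-(1/2 : ℝ)) * Real.exp (-c₁ * (x - y) ^ 2 / t) ≤
          1 / (2 * Real.sinh t) *
            Real.exp (-(1/4) * (Real.cosh t / Real.sinh t) * (x ^ 2 + y ^ 2)) *
            (x * y) ^ (-a) * I (x * y / (2 * Real.sinh t)) ∧
        1 / (2 * Real.sinh t) *
            Real.exp (-(1/4) * (Real.cosh t / Real.sinh t) * (x ^ 2 + y ^ 2)) *
            (x * y) ^ (-a) * I (x * y / (2 * Real.sinh t)) ≤
          C * (t + x * y) ^ (-a - 1/2) * t ^ (-(1/2 : ℝ)) * Real.exp (-c₂ * (x - y) ^ 2 / t) :=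
  stmt17_general a T I k₁ k₂ hk₁ hk₂ hI0 hIinf
end

section
/- Let α, β ≥ -1/2 and T > 0. Then the Poisson–Jacobi kernel satisfies ℋ_t^{(α,β)}(θ,φ) ≃ exp(-t(α+β+1)/2) uniformly in θ, φ ∈ [0,π] and t ≥ T; that is, there exist positive constants c, C depending only on α, β, T such that c·e^{-t(α+β+1)/2} ≤ ℋ_t^{(α,β)}(θ,φ) ≤ C·e^{-t(α+β+1)/2} for all θ, φ ∈ [0,π] and t ≥ T. -/
open Real MeasureTheory

/-- Total mass μ_{a,b}(0,π) of the measure (sin(θ/2))^{2a+1}(cos(θ/2))^{2b+1} dθ. -/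
noncomputable def muab (a b : ℝ) : ℝ :=
  ∫ θ in Set.Icc (0 : ℝ) π, (Real.sin (θ/2)) ^ (2 * a + 1) * (Real.cos (θ/2)) ^ (2 * b + 1)

/-- The constant c_{α,β} = 2^{-α-β-1}/μ_{α,β}(0,π). -/
noncomputable def cab (a b : ℝ) : ℝ := (2 : ℝ) ^ (-a - b - 1) / muab a b

/-- q(θ,φ,u,v) = 1 - u sin(θ/2)sin(φ/2) - v cos(θ/2)cos(φ/2). -/
noncomputable def qfun (θ φ u v : ℝ) : ℝ :=
  1 - u * Real.sin (θ/2) * Real.sin (φ/2) - v * Real.cos (θ/2) * Real.cos (φ/2)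

/-- The Poisson–Jacobi kernel ℋ_t^{(α,β)}, via its integral representation. -/
noncomputable def poissonJacobi (a b : ℝ) (t θ φ : ℝ) : ℝ :=
  cab a b * Real.sinh (t/2) *
    ∫ u, (∫ v, (Real.cosh (t/2) - 1 + qfun θ φ u v) ^ (-(a + b + 2)) ∂(jacobiPi b))
      ∂(jacobiPi a)

/-! On the support of `Π_α ⊗ Π_β` we have `0 ≤ q ≤ 2`, so the integrand lies between
`(cosh (t/2) + 1) ^ (-(α+β+2))` and `(cosh (t/2) - 1) ^ (-(α+β+2))`. Since both measures have
finite positive mass (their normalisation plays no role), `ℋ_t` is squeezed between constant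
multiples of `sinh (t/2) * (cosh (t/2) ± 1) ^ (-(α+β+2))`. For `t ≥ T` each of `sinh (t/2)`,
`cosh (t/2) + 1` and `cosh (t/2) - 1` is comparable to `exp (t/2)`, and
`exp (t/2) * exp (-(α+β+2) t/2) = exp (-(α+β+1) t/2)`. -/

open Set

lemma one_sub_sq_rpow_le {p s : ℝ} (hp : p ≤ 0) (hs : s ∈ Ioo (-1 : ℝ) 1) :
    (1 - s ^ 2) ^ p ≤ (1 - s) ^ p + (1 + s) ^ p := by
  have h₁ : 0 ≤ (1 - s) ^ p := rpow_nonneg (by linarith [hs.2]) p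
  have h₂ : 0 ≤ (1 + s) ^ p := rpow_nonneg (by linarith [hs.1]) p
  rcases le_total 0 s with hs0 | hs0
  · have : (1 - s ^ 2) ^ p ≤ (1 - s) ^ p :=
      rpow_le_rpow_of_nonpos (by linarith [hs.2]) (by nlinarith [hs.2]) hp
    linarith
  · have : (1 - s ^ 2) ^ p ≤ (1 + s) ^ p :=
      rpow_le_rpow_of_nonpos (by linarith [hs.1]) (by nlinarith [hs.1]) hp
    linarith

lemma integrableOn_one_sub_sq_rpow {p : ℝ} (hp : -1 < p) :
    IntegrableOn (fun s : ℝ => (1 - s ^ 2) ^ p) (Icc (-1) 1) := by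
  rcases le_or_gt 0 p with hp0 | hp0
  · exact ((continuous_rpow_const hp0).comp (by fun_prop)).integrableOn_Icc
  have hpow : IntervalIntegrable (fun x : ℝ => x ^ p) volume 0 2 :=
    intervalIntegral.intervalIntegrable_rpow' hp
  have hsub : IntegrableOn (fun s : ℝ => (1 - s) ^ p) (Ioo (-1) 1) := by
    have := (hpow.comp_sub_left 1).symm
    norm_num at this
    exact ((intervalIntegrable_iff_integrableOn_Ioo_of_le (by norm_num)).mp this)
  have hadd : IntegrableOn (fun s : ℝ => (1 + s) ^ p) (Ioo (-1) 1) := by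
    have := hpow.comp_add_left 1
    norm_num at this
    exact ((intervalIntegrable_iff_integrableOn_Ioo_of_le (by norm_num)).mp this)
  rw [integrableOn_Icc_iff_integrableOn_Ioo]
  refine (hsub.add hadd).mono' (Measurable.aestronglyMeasurable (by fun_prop)) ?_
  filter_upwards [ae_restrict_mem measurableSet_Ioo] with s hs
  rw [norm_of_nonneg (rpow_nonneg (by nlinarith [hs.1, hs.2]) p)]
  exact one_sub_sq_rpow_le hp0.le hs

lemma jacobiPi_of_ne {ν : ℝ} (hν : ν ≠ -1/2) :
    jacobiPi ν = (volume.restrict (Icc (-1 : ℝ) 1)).withDensity (fun s => ENNReal.ofReal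
      (Gamma (ν + 1) / (√π * Gamma (ν + 1/2)) * (1 - s ^ 2) ^ (ν - 1/2))) :=
  if_neg hν

lemma jacobiPi_ae_mem_Icc (ν : ℝ) : ∀ᵐ s ∂jacobiPi ν, s ∈ Icc (-1 : ℝ) 1 := by
  by_cases hν : ν = -1/2
  · simp [jacobiPi, hν, ae_iff]
  · rw [jacobiPi_of_ne hν]
    exact (withDensity_absolutelyContinuous _ _).ae_le (ae_restrict_mem measurableSet_Icc)

lemma jacobiPi_normalization_pos {ν : ℝ} (hν : -1/2 < ν) :
    0 < Gamma (ν + 1) / (√π * Gamma (ν + 1/2)) := by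
  have := Real.Gamma_pos_of_pos (s := ν + 1/2) (by linarith)
  have := Real.Gamma_pos_of_pos (s := ν + 1) (by linarith)
  positivity

lemma isFiniteMeasure_jacobiPi {ν : ℝ} (hν : -1/2 ≤ ν) : IsFiniteMeasure (jacobiPi ν) := by
  by_cases h : ν = -1/2
  · rw [jacobiPi, if_pos h]
    constructor
    simp
  · rw [jacobiPi_of_ne h]
    exact isFiniteMeasure_withDensity_ofReal
      ((integrableOn_one_sub_sq_rpow (by linarith [lt_of_le_of_ne hν (Ne.symm h)])).const_mul
        _).hasFiniteIntegral

lemma jacobiPi_ne_zero {ν : ℝ} (hν : -1/2 ≤ ν) : jacobiPi ν ≠ 0 := by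
  by_cases h : ν = -1/2
  · rw [jacobiPi, if_pos h]
    intro h0
    simpa using congrArg (· univ) h0
  have hν' : -1/2 < ν := lt_of_le_of_ne hν (Ne.symm h)
  rw [jacobiPi_of_ne h, Ne, withDensity_eq_zero_iff (by fun_prop),
    Filter.EventuallyEq, ae_restrict_iff' measurableSet_Icc]
  intro hzero
  have hIoo : volume (Ioo (-1 : ℝ) 1) = 0 := by
    rw [measure_eq_zero_iff_ae_notMem]
    filter_upwards [hzero] with s hs hsIoo
    have hpos : 0 < 1 - s ^ 2 := by nlinarith [hsIoo.1, hsIoo.2]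
    have := hs (Ioo_subset_Icc_self hsIoo)
    simp only [Pi.zero_apply, ENNReal.ofReal_eq_zero] at this
    exact this.not_gt (mul_pos (jacobiPi_normalization_pos hν') (rpow_pos_of_pos hpos _))
  norm_num at hIoo

lemma muab_pos {a b : ℝ} (ha : -1/2 ≤ a) (hb : -1/2 ≤ b) : 0 < muab a b := by
  rw [muab, integral_Icc_eq_integral_Ioc, ← intervalIntegral.integral_of_le pi_pos.le]
  refine intervalIntegral.intervalIntegral_pos_of_pos_on ?_ (fun θ hθ => ?_) pi_pos
  · refine Continuous.intervalIntegrable ?_ _ _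
    exact ((continuous_rpow_const (by linarith)).comp (by fun_prop)).mul
      ((continuous_rpow_const (by linarith)).comp (by fun_prop))
  · have hsin : 0 < sin (θ/2) :=
      sin_pos_of_pos_of_lt_pi (by linarith [hθ.1]) (by linarith [hθ.2, pi_pos])
    have hcos : 0 < cos (θ/2) :=
      cos_pos_of_mem_Ioo ⟨by linarith [hθ.1, pi_pos], by linarith [hθ.2]⟩
    positivity

lemma cab_pos {a b : ℝ} (ha : -1/2 ≤ a) (hb : -1/2 ≤ b) : 0 < cab a b :=
  div_pos (rpow_pos_of_pos two_pos _) (muab_pos ha hb)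

lemma qfun_mem_Icc {θ φ u v : ℝ} (hθ : θ ∈ Icc 0 π) (hφ : φ ∈ Icc 0 π)
    (hu : u ∈ Icc (-1 : ℝ) 1) (hv : v ∈ Icc (-1 : ℝ) 1) : qfun θ φ u v ∈ Icc 0 2 := by
  have hss : 0 ≤ sin (θ/2) * sin (φ/2) := mul_nonneg
    (sin_nonneg_of_nonneg_of_le_pi (by linarith [hθ.1]) (by linarith [hθ.2, pi_pos]))
    (sin_nonneg_of_nonneg_of_le_pi (by linarith [hφ.1]) (by linarith [hφ.2, pi_pos]))
  have hcc : 0 ≤ cos (θ/2) * cos (φ/2) := mul_nonneg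
    (cos_nonneg_of_mem_Icc ⟨by linarith [hθ.1, pi_pos], by linarith [hθ.2]⟩)
    (cos_nonneg_of_mem_Icc ⟨by linarith [hφ.1, pi_pos], by linarith [hφ.2]⟩)
  have hsum : cos (θ/2) * cos (φ/2) + sin (θ/2) * sin (φ/2) ≤ 1 :=
    (cos_sub (θ/2) (φ/2)).symm.trans_le (cos_le_one _)
  constructor <;> simp only [qfun] <;>
    nlinarith [mul_le_mul_of_nonneg_right hu.1 hss, mul_le_mul_of_nonneg_right hu.2 hss,
      mul_le_mul_of_nonneg_right hv.1 hcc, mul_le_mul_of_nonneg_right hv.2 hcc]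

lemma integral_mem_Icc_of_ae_mem {α : Type*} [MeasurableSpace α] {μ : Measure α}
    [IsFiniteMeasure μ] {f : α → ℝ} (hf : AEStronglyMeasurable f μ) {lo hi : ℝ}
    (h : ∀ᵐ x ∂μ, f x ∈ Icc lo hi) :
    ∫ x, f x ∂μ ∈ Icc (lo * μ.real univ) (hi * μ.real univ) := by
  have hint : Integrable f μ := .of_bound hf (max |lo| |hi|) <| by
    filter_upwards [h] with x hx using abs_le_max_abs_abs hx.1 hx.2
  have hconst (c : ℝ) : ∫ _, c ∂μ = c * μ.real univ := by
    rw [integral_const, smul_eq_mul, mul_comm]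
  constructor
  · rw [← hconst]
    exact integral_mono_ae (integrable_const lo) hint (h.mono fun x hx => hx.1)
  · rw [← hconst]
    exact integral_mono_ae hint (integrable_const hi) (h.mono fun x hx => hx.2)

lemma integral_integral_mem_Icc_of_ae_mem {α β : Type*} [MeasurableSpace α] [MeasurableSpace β]
    {μ : Measure α} {ν : Measure β} [IsFiniteMeasure μ] [IsFiniteMeasure ν]
    {F : α → β → ℝ}
    (hF : Measurable (Function.uncurry F)) {lo hi : ℝ}
    (h : ∀ᵐ x ∂μ, ∀ᵐ y ∂ν, F x y ∈ Icc lo hi) :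
    ∫ x, ∫ y, F x y ∂ν ∂μ ∈
      Icc (lo * ν.real univ * μ.real univ) (hi * ν.real univ * μ.real univ) := by
  refine integral_mem_Icc_of_ae_mem ?_ (h.mono fun x hx => ?_)
  · exact hF.stronglyMeasurable.integral_prod_right'.aestronglyMeasurable
  · exact integral_mem_Icc_of_ae_mem (hF.comp measurable_prodMk_left).aestronglyMeasurable hx

lemma sinh_le_exp (x : ℝ) : sinh x ≤ exp x := by
  rw [sinh_eq]
  linarith [exp_pos x, exp_pos (-x)]

lemma exp_mul_le_sinh {S x : ℝ} (hSx : S ≤ x) : (1 - exp (-2 * S)) / 2 * exp x ≤ sinh x := by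
  have : exp (-x) ≤ exp (-2 * S) * exp x := by
    rw [← exp_add]
    exact exp_le_exp.mpr (by linarith)
  rw [sinh_eq]
  linarith

lemma cosh_add_one_le {x : ℝ} (hx : 0 ≤ x) : cosh x + 1 ≤ 2 * exp x := by
  rw [cosh_eq]
  linarith [one_le_exp hx, exp_le_one_iff.mpr (neg_nonpos.mpr hx)]

lemma exp_mul_le_cosh_sub_one {S x : ℝ} (hS : 0 ≤ S) (hSx : S ≤ x) :
    (1 - exp (-S)) ^ 2 / 2 * exp x ≤ cosh x - 1 := by
  have hsq : exp x * (1 - exp (-x)) ^ 2 = exp x - 2 + exp (-x) := by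
    have : exp x * exp (-x) = 1 := by rw [← exp_add, add_neg_cancel, exp_zero]
    linear_combination (exp (-x) - 2) * this
  have hmono : (1 - exp (-S)) ^ 2 ≤ (1 - exp (-x)) ^ 2 := by
    have h₀ : exp (-S) ≤ 1 := exp_le_one_iff.mpr (by linarith)
    have h₁ : exp (-x) ≤ exp (-S) := exp_le_exp.mpr (by linarith)
    nlinarith
  rw [cosh_eq]
  nlinarith [exp_pos x]

lemma le_sinh_mul_cosh_add_one_rpow {S x e : ℝ} (hS : 0 ≤ S) (hSx : S ≤ x) (he : e ≤ 0) :
    (1 - exp (-2 * S)) / 2 * 2 ^ e * exp (x * (1 + e)) ≤ sinh x * (cosh x + 1) ^ e := by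
  have hsinh := exp_mul_le_sinh hSx
  have hcosh : (2 * exp x) ^ e ≤ (cosh x + 1) ^ e :=
    rpow_le_rpow_of_nonpos (by positivity) (cosh_add_one_le (hS.trans hSx)) he
  rw [mul_rpow zero_le_two (exp_pos x).le, ← exp_mul] at hcosh
  calc (1 - exp (-2 * S)) / 2 * 2 ^ e * exp (x * (1 + e))
      = ((1 - exp (-2 * S)) / 2 * exp x) * (2 ^ e * exp (x * e)) := by
        rw [mul_one_add, exp_add]; ring
    _ ≤ sinh x * (cosh x + 1) ^ e :=
        mul_le_mul hsinh hcosh (by positivity) (sinh_nonneg_iff.mpr (hS.trans hSx))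

lemma sinh_mul_cosh_sub_one_rpow_le {S x e : ℝ} (hS : 0 < S) (hSx : S ≤ x) (he : e ≤ 0) :
    sinh x * (cosh x - 1) ^ e ≤ ((1 - exp (-S)) ^ 2 / 2) ^ e * exp (x * (1 + e)) := by
  have hk : 0 < (1 - exp (-S)) ^ 2 / 2 := by
    have : exp (-S) < 1 := exp_lt_one_iff.mpr (by linarith)
    have : 0 < 1 - exp (-S) := by linarith
    positivity
  have hcosh : (cosh x - 1) ^ e ≤ ((1 - exp (-S)) ^ 2 / 2 * exp x) ^ e :=
    rpow_le_rpow_of_nonpos (by positivity) (exp_mul_le_cosh_sub_one hS.le hSx) he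
  rw [mul_rpow hk.le (exp_pos x).le, ← exp_mul] at hcosh
  calc sinh x * (cosh x - 1) ^ e
      ≤ exp x * (((1 - exp (-S)) ^ 2 / 2) ^ e * exp (x * e)) :=
        mul_le_mul (sinh_le_exp x) hcosh (rpow_nonneg (sub_nonneg.mpr (one_le_cosh x)) e)
          (exp_pos x).le
    _ = ((1 - exp (-S)) ^ 2 / 2) ^ e * exp (x * (1 + e)) := by
        rw [mul_one_add, exp_add]; ring

lemma poissonJacobi_mem_Icc {a b t θ φ : ℝ} (ha : -1/2 ≤ a) (hb : -1/2 ≤ b) (ht : 0 < t)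
    (hθ : θ ∈ Icc 0 π) (hφ : φ ∈ Icc 0 π) :
    poissonJacobi a b t θ φ ∈
      Icc (cab a b * ((jacobiPi b).real univ * (jacobiPi a).real univ) *
          (sinh (t/2) * (cosh (t/2) + 1) ^ (-(a + b + 2))))
        (cab a b * ((jacobiPi b).real univ * (jacobiPi a).real univ) *
          (sinh (t/2) * (cosh (t/2) - 1) ^ (-(a + b + 2)))) := by
  have := isFiniteMeasure_jacobiPi ha
  have := isFiniteMeasure_jacobiPi hb
  have hcosh : 1 < cosh (t/2) := one_lt_cosh.mpr (by positivity)
  have hI := integral_integral_mem_Icc_of_ae_mem (μ := jacobiPi a) (ν := jacobiPi b)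
    (F := fun u v => (cosh (t/2) - 1 + qfun θ φ u v) ^ (-(a + b + 2)))
    (lo := (cosh (t/2) + 1) ^ (-(a + b + 2))) (hi := (cosh (t/2) - 1) ^ (-(a + b + 2)))
    (by unfold qfun Function.uncurry; fun_prop) <| by
      filter_upwards [jacobiPi_ae_mem_Icc a] with u hu
      filter_upwards [jacobiPi_ae_mem_Icc b] with v hv
      have hq := qfun_mem_Icc hθ hφ hu hv
      constructor <;> exact rpow_le_rpow_of_nonpos (by linarith [hq.1]) (by linarith [hq.1, hq.2])
        (by linarith)
  have hpre : 0 ≤ cab a b * sinh (t/2) :=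
    mul_nonneg (cab_pos ha hb).le (sinh_nonneg_iff.mpr (by positivity))
  exact ⟨le_of_eq_of_le (by ring) (mul_le_mul_of_nonneg_left hI.1 hpre),
    le_of_le_of_eq (mul_le_mul_of_nonneg_left hI.2 hpre) (by ring)⟩

/-- Theorem A.1 (large time part): for α, β ≥ -1/2 and t ≥ T, uniformly in θ, φ ∈ [0,π],
ℋ_t^{(α,β)}(θ,φ) ≃ exp(-t(α+β+1)/2). -/
theorem stmt19 (a b T : ℝ) (ha : -1/2 ≤ a) (hb : -1/2 ≤ b) (hT : 0 < T) :
    ∃ c C : ℝ, 0 < c ∧ 0 < C ∧ ∀ θ φ t : ℝ, θ ∈ Set.Icc 0 π → φ ∈ Set.Icc 0 π → T ≤ t →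
      c * Real.exp (-t * (a + b + 1) / 2) ≤ poissonJacobi a b t θ φ ∧
      poissonJacobi a b t θ φ ≤ C * Real.exp (-t * (a + b + 1) / 2) := by
  have := isFiniteMeasure_jacobiPi ha
  have := isFiniteMeasure_jacobiPi hb
  have : NeZero (jacobiPi a) := ⟨jacobiPi_ne_zero ha⟩
  have : NeZero (jacobiPi b) := ⟨jacobiPi_ne_zero hb⟩
  set K := cab a b * ((jacobiPi b).real univ * (jacobiPi a).real univ)
  have hK : 0 < K := mul_pos (cab_pos ha hb) (mul_pos measureReal_univ_pos measureReal_univ_pos)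
  have hT₁ : 0 < 1 - exp (-(T/2)) := sub_pos.mpr (exp_lt_one_iff.mpr (by linarith))
  have hT₂ : 0 < 1 - exp (-2 * (T/2)) := sub_pos.mpr (exp_lt_one_iff.mpr (by linarith))
  refine ⟨K * ((1 - exp (-2 * (T/2))) / 2 * 2 ^ (-(a + b + 2))),
    K * ((1 - exp (-(T/2))) ^ 2 / 2) ^ (-(a + b + 2)), by positivity,
    mul_pos hK (rpow_pos_of_pos (by positivity) _), fun θ φ t hθ hφ ht => ?_⟩
  have hx : T/2 ≤ t/2 := by linarith
  have he : -(a + b + 2) ≤ 0 := by linarith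
  have hexp : exp (t/2 * (1 + -(a + b + 2))) = exp (-t * (a + b + 1) / 2) := by congr 1; ring
  obtain ⟨hlo, hhi⟩ := poissonJacobi_mem_Icc (t := t) ha hb (by linarith) hθ hφ
  rw [← hexp]
  exact ⟨((mul_assoc _ _ _).trans_le (mul_le_mul_of_nonneg_left
      (le_sinh_mul_cosh_add_one_rpow (by positivity) hx he) hK.le)).trans hlo,
    hhi.trans ((mul_le_mul_of_nonneg_left
      (sinh_mul_cosh_sub_one_rpow_le (by positivity) hx he) hK.le).trans_eq
        (mul_assoc _ _ _).symm)⟩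
end
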